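/- arXiv:1406.3263 — 6 statements merged into one kernel-verified Lean document; each statement's English description precedes it below -/
import Mathlib

section
/- The projection map π restricted to Ũ is a homeomorphism from Ũ (with the subspace topology induced by the product topology on {1,…,m}^ℕ, where {1,…,m} is discrete) onto the univoque set U (with the Euclidean subspace topology). -/
open Filter Topology Set

/-- `ifsIter m f i n = f_{i₁} ∘ ⋯ ∘ f_{iₙ} (0)`. -/
noncomputable def ifsIter (m : ℕ) (f : Fin m → ℝ → ℝ) : (ℕ → Fin m) → ℕ → ℝ
  | _, 0 => 0
  | i, n + 1 => f (i 0) (ifsIter m f (fun k => i (k + 1)) n)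

/-- the projection map restricted to the set of unique codings `Ũ`
(with the subspace topology of the product topology on `{1,…,m}^ℕ`) is a
homeomorphism onto the univoque set `U` (with the Euclidean subspace topology). -/
theorem stmt0 (m : ℕ) (hm : 2 ≤ m) (r a : Fin m → ℝ)
    (hr : ∀ j, 0 < r j ∧ r j < 1)
    (f : Fin m → ℝ → ℝ) (hf : ∀ j x, f j x = r j * x + a j)
    (K : Set ℝ) (hKne : K.Nonempty) (hKc : IsCompact K)
    (hK : K = ⋃ j, f j '' K)
    (proj : (ℕ → Fin m) → ℝ)
    (hproj : ∀ i : ℕ → Fin m, Tendsto (ifsIter m f i) atTop (𝓝 (proj i)))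
    (U : Set ℝ)
    (hU : U = {x | x ∈ K ∧ ∃! i : ℕ → Fin m, Tendsto (ifsIter m f i) atTop (𝓝 x)})
    (Ut : Set (ℕ → Fin m)) (hUt : Ut = proj ⁻¹' U) :
    ∃ e : Ut ≃ₜ U, ∀ i : Ut, (e i : ℝ) = proj i.1 := by
  have hmne : (Finset.univ : Finset (Fin m)).Nonempty := by
    refine ⟨⟨0, by omega⟩, Finset.mem_univ _⟩
  set ρ : ℝ := Finset.univ.sup' hmne r with hρdef
  have hρj : ∀ j, r j ≤ ρ := fun j => Finset.le_sup' r (Finset.mem_univ j)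
  have hρ1 : ρ < 1 := (Finset.sup'_lt_iff hmne).2 fun j _ => (hr j).2
  have hρ0 : 0 < ρ := lt_of_lt_of_le (hr ⟨0, by omega⟩).1 (hρj _)
  set A : ℝ := Finset.univ.sup' hmne (fun j => |a j|) with hAdef
  have hAj : ∀ j, |a j| ≤ A := fun j =>
    Finset.le_sup' (fun j => |a j|) (Finset.mem_univ j)
  have hA0 : 0 ≤ A := le_trans (abs_nonneg _) (hAj ⟨0, by omega⟩)
  set B : ℝ := A / (1 - ρ) with hBdef
  have hB0 : 0 ≤ B := div_nonneg hA0 (by linarith)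
  have hne : (1:ℝ) - ρ ≠ 0 := by linarith
  have hBeq : ρ * B + A = B := by
    rw [hBdef]; field_simp; ring
  -- uniform bound on iterates
  have hbd : ∀ n (i : ℕ → Fin m), |ifsIter m f i n| ≤ B := by
    intro n
    induction n with
    | zero => intro i; simp [ifsIter, hB0]
    | succ n ih =>
      intro i
      have hx := ih (fun k => i (k + 1))
      calc |ifsIter m f i (n+1)| = |r (i 0) * ifsIter m f (fun k => i (k+1)) n + a (i 0)| := by
            rw [show ifsIter m f i (n+1) = f (i 0) (ifsIter m f (fun k => i (k+1)) n) from rfl,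
              hf]
        _ ≤ |r (i 0) * ifsIter m f (fun k => i (k+1)) n| + |a (i 0)| := abs_add_le _ _
        _ ≤ ρ * B + A := by
            refine add_le_add ?_ (hAj _)
            rw [abs_mul, abs_of_pos (hr (i 0)).1]
            exact mul_le_mul (hρj _) hx (abs_nonneg _) (le_of_lt hρ0)
        _ = B := hBeq
  have hpbd : ∀ i : ℕ → Fin m, |proj i| ≤ B := by
    intro i
    exact le_of_tendsto' ((hproj i).abs) (fun n => hbd n i)
  -- shift relation
  have hshift : ∀ i : ℕ → Fin m, proj i = f (i 0) (proj (fun k => i (k + 1))) := by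
    intro i
    have h1 : Tendsto (fun n => ifsIter m f i (n + 1)) atTop (𝓝 (proj i)) :=
      (hproj i).comp (tendsto_add_atTop_nat 1)
    have hfc : Continuous (f (i 0)) := by
      have : f (i 0) = fun x => r (i 0) * x + a (i 0) := funext fun x => hf _ x
      rw [this]
      exact (continuous_const.mul continuous_id).add continuous_const
    have h2 : Tendsto (fun n => ifsIter m f i (n + 1)) atTop
        (𝓝 (f (i 0) (proj (fun k => i (k + 1))))) := by
      have : (fun n => ifsIter m f i (n + 1)) =
          fun n => f (i 0) (ifsIter m f (fun k => i (k + 1)) n) := rfl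
      rw [this]
      exact hfc.continuousAt.tendsto.comp (hproj _)
    exact tendsto_nhds_unique h1 h2
  -- Hölder-type estimate
  have hlip : ∀ n (i i' : ℕ → Fin m), (∀ k, k < n → i k = i' k) →
      |proj i - proj i'| ≤ ρ ^ n * (2 * B) := by
    intro n
    induction n with
    | zero =>
      intro i i' _
      rw [pow_zero, one_mul]
      calc |proj i - proj i'| ≤ |proj i| + |proj i'| := abs_sub _ _
        _ ≤ 2 * B := by have := hpbd i; have := hpbd i'; linarith
    | succ n ih =>
      intro i i' h
      have h0 : i 0 = i' 0 := h 0 (Nat.succ_pos n)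
      have htail : ∀ k, k < n → (fun k => i (k+1)) k = (fun k => i' (k+1)) k := by
        intro k hk; exact h (k + 1) (by omega)
      have hih := ih _ _ htail
      have : proj i - proj i' = r (i 0) * (proj (fun k => i (k+1)) - proj (fun k => i' (k+1))) := by
        rw [hshift i, hshift i', ← h0, hf, hf]; ring
      rw [this, abs_mul, abs_of_pos (hr (i 0)).1]
      calc r (i 0) * |proj (fun k => i (k+1)) - proj (fun k => i' (k+1))|
          ≤ ρ * (ρ ^ n * (2 * B)) :=
            mul_le_mul (hρj _) hih (abs_nonneg _) (le_of_lt hρ0)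
        _ = ρ ^ (n + 1) * (2 * B) := by ring
  -- continuity of proj
  have hcont : Continuous proj := by
    rw [continuous_iff_continuousAt]
    intro i₀
    rw [ContinuousAt, Metric.tendsto_nhds]
    intro ε hε
    have hlim : Tendsto (fun n => ρ ^ n * (2 * B)) atTop (𝓝 0) := by
      have := (tendsto_pow_atTop_nhds_zero_of_lt_one (le_of_lt hρ0) hρ1).mul_const (2 * B)
      simpa using this
    obtain ⟨n, hn⟩ := (hlim.eventually (gt_mem_nhds hε)).exists
    have hSopen : IsOpen {i : ℕ → Fin m | ∀ k, k < n → i k = i₀ k} := by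
      have : {i : ℕ → Fin m | ∀ k, k < n → i k = i₀ k} =
          ⋂ k ∈ Finset.range n, (fun i : ℕ → Fin m => i k) ⁻¹' {i₀ k} := by
        ext i; simp [Finset.mem_range]
      rw [this]
      exact isOpen_biInter_finset fun k _ =>
        (continuous_apply k).isOpen_preimage _ (isOpen_discrete _)
    have hmem : {i : ℕ → Fin m | ∀ k, k < n → i k = i₀ k} ∈ 𝓝 i₀ :=
      hSopen.mem_nhds (fun k _ => rfl)
    filter_upwards [hmem] with i hi
    rw [Real.dist_eq]
    exact lt_of_le_of_lt (hlip n i i₀ hi) hn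
  -- membership and the map
  have hUt' : ∀ x, x ∈ Ut ↔ proj x ∈ U := fun x => by rw [hUt]; exact Iff.rfl
  have hU' : ∀ x, x ∈ U ↔ x ∈ K ∧ ∃! i : ℕ → Fin m,
      Tendsto (ifsIter m f i) atTop (𝓝 x) := fun x => by rw [hU]; exact Iff.rfl
  have hmemU : ∀ i : Ut, proj i.1 ∈ U := fun i => (hUt' i.1).1 i.2
  let g : Ut → U := fun i => ⟨proj i.1, hmemU i⟩
  have hgc : Continuous g := Continuous.subtype_mk (hcont.comp continuous_subtype_val) _
  have hinj : Function.Injective g := by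
    intro i i' hii
    have heq : proj i.1 = proj i'.1 := congrArg Subtype.val hii
    obtain ⟨-, j, hj, huniq⟩ := (hU' _).1 (hmemU i)
    have h1 : i.1 = j := huniq i.1 (hproj i.1)
    have h2 : i'.1 = j := huniq i'.1 (heq ▸ hproj i'.1)
    exact Subtype.ext (h1.trans h2.symm)
  have hsurj : Function.Surjective g := by
    intro u
    obtain ⟨-, j, hj, -⟩ := (hU' _).1 u.2
    have hju : proj j = u.1 := tendsto_nhds_unique (hproj j) hj
    have hjUt : j ∈ Ut := (hUt' j).2 (hju ▸ u.2)
    exact ⟨⟨j, hjUt⟩, Subtype.ext hju⟩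
  let E : Ut ≃ U := Equiv.ofBijective g ⟨hinj, hsurj⟩
  have hclosed : ∀ C : Set Ut, IsClosed C → IsClosed (g '' C) := by
    intro C hC
    obtain ⟨C', hC', hval⟩ := isClosed_induced_iff.1 hC
    have hD : IsClosed (proj '' C') := (hC'.isCompact.image hcont).isClosed
    have himg : g '' C = Subtype.val ⁻¹' (proj '' C') := by
      ext u
      constructor
      · rintro ⟨i, hiC, rfl⟩
        exact ⟨i.1, by rw [← hval] at hiC; exact hiC, rfl⟩
      · rintro ⟨x, hxC', hxu⟩
        have hxUt : x ∈ Ut := (hUt' x).2 (hxu ▸ u.2)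
        refine ⟨⟨x, hxUt⟩, ?_, Subtype.ext hxu⟩
        rw [← hval]; exact hxC'
    rw [himg]
    exact hD.preimage continuous_subtype_val
  refine ⟨{ E with
    continuous_toFun := hgc
    continuous_invFun := by
      show Continuous ⇑E.symm
      rw [continuous_iff_isClosed]
      intro C hC
      have : ⇑E.symm ⁻¹' C = g '' C := by
        rw [← Equiv.image_eq_preimage_symm]; rfl
      rw [this]
      exact hclosed C hC }, fun i => rfl⟩
end

section
/- Let x ∈ K. Then x ∉ U if and only if there exist N ≥ 0, a finite word (i_1,…,i_N) ∈ {1,…,m}^N, and distinct digits k, l ∈ {1,…,m} such that T_{i_1…i_N k}(x) ∈ K and T_{i_1…i_N l}(x) ∈ K. -/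
/-!
A sequence `i` codes `x` exactly when `x` never leaves `K` under the inverse maps along `i`,
i.e. `T_{i₁…iₙ}(x) ∈ K` for all `n`. If so, `x = f_{i₁…iₙ}(T_{i₁…iₙ}(x))` and `f_{i₁…iₙ}(0)` are
`ρⁿ`-close, `ρ < 1` a common contraction ratio; conversely the tail of a coding of `x` after `n`
digits codes `T_{i₁…iₙ}(x)`, and every coded point lies in the closed invariant set `K`.
Two such sequences for `x` first differ after a common word `w`, giving the two digits `k ≠ l`.
Conversely, every point `y ∈ K` lies in some `f_j(K)`, so choosing such a `j` again and again
gives a coding of any point of `K`; this extends `w k` and `w l` to two distinct codings of `x`.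
-/

open Filter Topology Set

/-- Apply `T_{i₁…i_N}` (i.e. `T_{i_N} ∘ ⋯ ∘ T_{i₁}`) to `x`, where the word is a list. -/
noncomputable def invIterWord (m : ℕ) (T : Fin m → ℝ → ℝ) (w : List (Fin m)) (x : ℝ) : ℝ :=
  w.foldl (fun y j => T j y) x

open Function NNReal

section Words

variable {ι α : Type*}

theorem mapsTo_foldr {f : ι → α → α} {K : Set α} (h : ∀ j, MapsTo (f j) K K) (w : List ι) :
    MapsTo (w.foldr f ·) K K := by
  induction w with
  | nil => exact mapsTo_id K
  | cons j w ih => exact (h j).comp ih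

theorem lipschitzWith_foldr [PseudoEMetricSpace α] {f : ι → α → α} {ρ : ℝ≥0}
    (h : ∀ j, LipschitzWith ρ (f j)) (w : List ι) :
    LipschitzWith (ρ ^ w.length) (w.foldr f ·) := by
  induction w with
  | nil => exact LipschitzWith.id
  | cons j w ih => rw [List.length_cons, pow_succ']; exact (h j).comp ih

theorem exists_lipschitzWith_lt_one_forall [Fintype ι] [PseudoEMetricSpace α] {f : ι → α → α}
    (h : ∀ j, ∃ ρ < 1, LipschitzWith ρ (f j)) : ∃ ρ < 1, ∀ j, LipschitzWith ρ (f j) := by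
  choose ρ hρ hf using h
  exact ⟨Finset.univ.sup ρ, (Finset.sup_lt_iff zero_lt_one).2 fun j _ => hρ j,
    fun j => (hf j).weaken (Finset.le_sup (Finset.mem_univ j))⟩

theorem tendsto_dist_of_le_geometric [PseudoMetricSpace α] {u v : ℕ → α} {ρ : ℝ≥0} (hρ : ρ < 1)
    {C : ℝ} (h : ∀ n, dist (u n) (v n) ≤ ρ ^ n * C) :
    Tendsto (fun n => dist (u n) (v n)) atTop (𝓝 0) := by
  refine squeeze_zero (fun _ => dist_nonneg) h ?_
  simpa using (tendsto_pow_atTop_nhds_zero_of_lt_one ρ.2 hρ).mul_const C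

end Words

section InverseWords

variable {m : ℕ} {f T : Fin m → ℝ → ℝ} {K : Set ℝ}

theorem invIterWord_append (u v : List (Fin m)) (x : ℝ) :
    invIterWord m T (u ++ v) x = invIterWord m T v (invIterWord m T u x) :=
  List.foldl_append ..

theorem invIterWord_concat (w : List (Fin m)) (k : Fin m) (x : ℝ) :
    invIterWord m T (w ++ [k]) x = T k (invIterWord m T w x) :=
  invIterWord_append ..

theorem foldr_invIterWord (hfT : ∀ j, LeftInverse (f j) (T j)) (w : List (Fin m)) (x : ℝ) :
    w.foldr f (invIterWord m T w x) = x := by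
  induction w generalizing x with
  | nil => rfl
  | cons j w ih => exact (congrArg (f j) (ih (T j x))).trans (hfT j x)

theorem invIterWord_foldr (hTf : ∀ j, LeftInverse (T j) (f j)) (w : List (Fin m)) (x : ℝ) :
    invIterWord m T w (w.foldr f x) = x := by
  induction w generalizing x with
  | nil => rfl
  | cons j w ih => exact (congrArg (invIterWord m T w) (hTf j _)).trans (ih x)

theorem continuous_invIterWord (hT : ∀ j, Continuous (T j)) (w : List (Fin m)) :
    Continuous (invIterWord m T w) := by
  induction w with
  | nil => exact continuous_id
  | cons j w ih => exact ih.comp (hT j)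

theorem invIterWord_take_mem (hfT : ∀ j, LeftInverse (f j) (T j)) (hmaps : ∀ j, MapsTo (f j) K K)
    {w : List (Fin m)} {x : ℝ} (hw : invIterWord m T w x ∈ K) (n : ℕ) :
    invIterWord m T (w.take n) x ∈ K := by
  have hsplit :
      invIterWord m T w x = invIterWord m T (w.drop n) (invIterWord m T (w.take n) x) := by
    rw [← invIterWord_append, List.take_append_drop]
  simpa only [hsplit, foldr_invIterWord hfT] using mapsTo_foldr hmaps (w.drop n) hw

end InverseWords

section Codings

-- `Stream' α` is `ℕ → α` by definition, so codings get the `Stream'.take`/`drop` API.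
variable {m : ℕ} {f T : Fin m → ℝ → ℝ} {K : Set ℝ} {ρ : ℝ≥0}

theorem ifsIter_eq_foldr (i : Stream' (Fin m)) (n : ℕ) :
    ifsIter m f i n = (Stream'.take n i).foldr f 0 := by
  induction n generalizing i with
  | zero => rfl
  | succ n ih => exact congrArg (f (i 0)) (ih _)

theorem ifsIter_add (i : Stream' (Fin m)) (n p : ℕ) :
    ifsIter m f i (n + p) = (Stream'.take n i).foldr f (ifsIter m f (Stream'.drop n i) p) := by
  simp only [ifsIter_eq_foldr, Stream'.take_add, List.foldr_append]

theorem mem_of_tendsto_ifsIter (hρ : ρ < 1) (hf : ∀ j, LipschitzWith ρ (f j))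
    (hmaps : ∀ j, MapsTo (f j) K K) (hK : IsClosed K) (hne : K.Nonempty) {i : Stream' (Fin m)}
    {y : ℝ} (hi : Tendsto (ifsIter m f i) atTop (𝓝 y)) : y ∈ K := by
  obtain ⟨z, hz⟩ := hne
  have hshadow : Tendsto (fun n => (Stream'.take n i).foldr f z) atTop (𝓝 y) :=
    hi.congr_dist <| tendsto_dist_of_le_geometric hρ fun n => by
      simpa [ifsIter_eq_foldr] using (lipschitzWith_foldr hf (Stream'.take n i)).dist_le_mul 0 z
  exact hK.mem_of_tendsto hshadow (Eventually.of_forall fun n => mapsTo_foldr hmaps _ hz)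

theorem tendsto_ifsIter_drop (hTf : ∀ j, LeftInverse (T j) (f j)) (hT : ∀ j, Continuous (T j))
    {i : Stream' (Fin m)} {x : ℝ} (hi : Tendsto (ifsIter m f i) atTop (𝓝 x)) (n : ℕ) :
    Tendsto (ifsIter m f (Stream'.drop n i)) atTop
      (𝓝 (invIterWord m T (Stream'.take n i) x)) := by
  refine (((continuous_invIterWord hT _).tendsto x).comp
    (hi.comp (tendsto_add_atTop_nat n))).congr fun p => ?_
  rw [comp_apply, comp_apply, add_comm, ifsIter_add, invIterWord_foldr hTf]

theorem tendsto_ifsIter_iff (hρ : ρ < 1) (hf : ∀ j, LipschitzWith ρ (f j))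
    (hfT : ∀ j, LeftInverse (f j) (T j)) (hTf : ∀ j, LeftInverse (T j) (f j))
    (hT : ∀ j, Continuous (T j)) (hmaps : ∀ j, MapsTo (f j) K K) (hK : IsCompact K)
    (hne : K.Nonempty) {i : Stream' (Fin m)} {x : ℝ} :
    Tendsto (ifsIter m f i) atTop (𝓝 x) ↔ ∀ n, invIterWord m T (Stream'.take n i) x ∈ K := by
  refine ⟨fun hi n => mem_of_tendsto_ifsIter hρ hf hmaps hK.isClosed hne
    (tendsto_ifsIter_drop hTf hT hi n), fun hi => ?_⟩
  obtain ⟨C, hC⟩ := hK.isBounded.exists_norm_le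
  refine tendsto_iff_dist_tendsto_zero.2 (tendsto_dist_of_le_geometric hρ (C := C) fun n => ?_)
  calc dist (ifsIter m f i n) x
      = dist ((Stream'.take n i).foldr f 0)
          ((Stream'.take n i).foldr f (invIterWord m T (Stream'.take n i) x)) := by
        rw [ifsIter_eq_foldr, foldr_invIterWord hfT]
    _ ≤ ρ ^ n * |invIterWord m T (Stream'.take n i) x| := by
        simpa using (lipschitzWith_foldr hf (Stream'.take n i)).dist_le_mul 0
          (invIterWord m T (Stream'.take n i) x)
    _ ≤ ρ ^ n * C := by
        gcongr
        simpa using hC _ (hi n)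

end Codings

section Branching

variable {m : ℕ} {f T : Fin m → ℝ → ℝ} {K : Set ℝ} {x : ℝ}

theorem exists_forall_invIterWord_take_mem (hback : ∀ y ∈ K, ∃ j, T j y ∈ K) (hx : x ∈ K) :
    ∃ i : Stream' (Fin m), ∀ n, invIterWord m T (Stream'.take n i) x ∈ K := by
  have : Nonempty (Fin m) := ⟨(hback x hx).choose⟩
  choose! step hstep using hback
  let g : ℝ → ℝ := fun y => T (step y) y
  let i : Stream' (Fin m) := fun k => step (g^[k] x)
  have horbit : ∀ n, invIterWord m T (Stream'.take n i) x = g^[n] x ∧ g^[n] x ∈ K := by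
    intro n
    induction n with
    | zero => exact ⟨rfl, hx⟩
    | succ n ih =>
      rw [Stream'.take_succ', invIterWord_concat, ih.1, iterate_succ_apply']
      exact ⟨rfl, hstep _ ih.2⟩
  exact ⟨i, fun n => (horbit n).1 ▸ (horbit n).2⟩

theorem exists_forall_invIterWord_take_append_mem (hback : ∀ y ∈ K, ∃ j, T j y ∈ K)
    (hfT : ∀ j, LeftInverse (f j) (T j)) (hmaps : ∀ j, MapsTo (f j) K K) {w : List (Fin m)}
    (hw : invIterWord m T w x ∈ K) :
    ∃ j : Stream' (Fin m), ∀ n, invIterWord m T (Stream'.take n (w ++ₛ j)) x ∈ K := by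
  obtain ⟨j, hj⟩ := exists_forall_invIterWord_take_mem hback hw
  refine ⟨j, fun n => ?_⟩
  rcases le_or_gt n w.length with hn | hn
  · rw [Stream'.take_append_of_le_length (h := hn)]
    exact invIterWord_take_mem hfT hmaps hw n
  · obtain ⟨p, rfl⟩ := Nat.exists_eq_add_of_le hn.le
    rw [← Stream'.append_take, invIterWord_append]
    exact hj p

theorem exists_branch_of_ne {i i' : Stream' (Fin m)}
    (hi : ∀ n, invIterWord m T (Stream'.take n i) x ∈ K)
    (hi' : ∀ n, invIterWord m T (Stream'.take n i') x ∈ K) (hne : i ≠ i') :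
    ∃ (w : List (Fin m)) (k l : Fin m), k ≠ l ∧
      T k (invIterWord m T w x) ∈ K ∧ T l (invIterWord m T w x) ∈ K := by
  classical
  have hdiff : ∃ n, i n ≠ i' n := by
    by_contra! h
    exact hne (funext h)
  have hprefix : Stream'.take (Nat.find hdiff) i = Stream'.take (Nat.find hdiff) i' :=
    List.ext_getElem (by simp) fun q hq _ => by
      rw [Stream'.take_get, Stream'.take_get]
      exact not_not.1 (Nat.find_min hdiff (by simpa using hq))
  refine ⟨Stream'.take (Nat.find hdiff) i, _, _, Nat.find_spec hdiff, ?_, ?_⟩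
  · have hnext := hi (Nat.find hdiff + 1)
    rwa [Stream'.take_succ', invIterWord_concat] at hnext
  · have hnext := hi' (Nat.find hdiff + 1)
    rwa [Stream'.take_succ', invIterWord_concat, ← hprefix] at hnext

theorem not_existsUnique_iff_exists_branch (hback : ∀ y ∈ K, ∃ j, T j y ∈ K)
    (hfT : ∀ j, LeftInverse (f j) (T j)) (hmaps : ∀ j, MapsTo (f j) K K) (hx : x ∈ K) :
    (¬ ∃! i : Stream' (Fin m), ∀ n, invIterWord m T (Stream'.take n i) x ∈ K) ↔
      ∃ (w : List (Fin m)) (k l : Fin m), k ≠ l ∧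
        T k (invIterWord m T w x) ∈ K ∧ T l (invIterWord m T w x) ∈ K := by
  constructor
  · intro hnu
    obtain ⟨i, hi⟩ := exists_forall_invIterWord_take_mem hback hx
    obtain ⟨i', hi', hne⟩ :
        ∃ i', (∀ n, invIterWord m T (Stream'.take n i') x ∈ K) ∧ i' ≠ i := by
      by_contra! h
      exact hnu ⟨i, hi, h⟩
    exact exists_branch_of_ne hi' hi hne
  · rintro ⟨w, k, l, hkl, hk, hl⟩ ⟨i, -, hunique⟩
    obtain ⟨j, hj⟩ := exists_forall_invIterWord_take_append_mem hback hfT hmaps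
      (w := w ++ [k]) (by rwa [invIterWord_concat])
    obtain ⟨j', hj'⟩ := exists_forall_invIterWord_take_append_mem hback hfT hmaps
      (w := w ++ [l]) (by rwa [invIterWord_concat])
    have hsame := congrArg (Stream'.get · w.length) ((hunique _ hj).trans (hunique _ hj').symm)
    simp only [Stream'.append_append_stream, Stream'.get_append_length] at hsame
    exact hkl hsame

end Branching

theorem stmt2_general (m : ℕ) (r a : Fin m → ℝ)
    (hr : ∀ j, 0 < r j ∧ r j < 1)
    (f : Fin m → ℝ → ℝ) (hf : ∀ j x, f j x = r j * x + a j)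
    (T : Fin m → ℝ → ℝ) (hT : ∀ j x, T j x = (x - a j) / r j)
    (K : Set ℝ) (hKc : IsCompact K)
    (hK : K = ⋃ j, f j '' K)
    (U : Set ℝ)
    (hU : U = {x | x ∈ K ∧ ∃! i : ℕ → Fin m, Tendsto (ifsIter m f i) atTop (𝓝 x)})
    (x : ℝ) (hx : x ∈ K) :
    x ∉ U ↔ ∃ (w : List (Fin m)) (k l : Fin m), k ≠ l ∧
      T k (invIterWord m T w x) ∈ K ∧ T l (invIterWord m T w x) ∈ K := by
  have hTf : ∀ j, LeftInverse (T j) (f j) := fun j y => by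
    rw [hf, hT, add_sub_cancel_right, mul_div_cancel_left₀ _ (hr j).1.ne']
  have hfT : ∀ j, LeftInverse (f j) (T j) := fun j y => by
    rw [hT, hf, mul_div_cancel₀ _ (hr j).1.ne', sub_add_cancel]
  have hTc : ∀ j, Continuous (T j) := fun j => by
    simp only [funext (hT j)]
    fun_prop
  have hmaps : ∀ j, MapsTo (f j) K K := fun j y hy =>
    hK ▸ mem_iUnion_of_mem j (mem_image_of_mem _ hy)
  have hback : ∀ y ∈ K, ∃ j, T j y ∈ K := fun y hy => by
    obtain ⟨j, z, hz, rfl⟩ := mem_iUnion.1 (hK ▸ hy)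
    exact ⟨j, (hTf j z).symm ▸ hz⟩
  obtain ⟨ρ, hρ, hlip⟩ := exists_lipschitzWith_lt_one_forall (f := f) fun j =>
    ⟨(r j).toNNReal, Real.toNNReal_lt_one.2 (hr j).2, LipschitzWith.of_dist_le_mul fun y z => by
      rw [hf, hf, Real.dist_eq, Real.dist_eq, Real.coe_toNNReal _ (hr j).1.le,
        add_sub_add_right_eq_sub, ← mul_sub, abs_mul, abs_of_pos (hr j).1]⟩
  rw [hU, mem_ofPred_eq, and_iff_right hx]
  exact (not_congr <| existsUnique_congr fun i =>
    tendsto_ifsIter_iff hρ hlip hfT hTf hTc hmaps hKc ⟨x, hx⟩).trans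
      (not_existsUnique_iff_exists_branch hback hfT hmaps hx)

/-- `x ∉ U` iff some finite word of inverse maps can be extended by
two distinct digits `k ≠ l` both of which map `x` back into `K`. -/
theorem stmt2 (m : ℕ) (hm : 2 ≤ m) (r a : Fin m → ℝ)
    (hr : ∀ j, 0 < r j ∧ r j < 1)
    (f : Fin m → ℝ → ℝ) (hf : ∀ j x, f j x = r j * x + a j)
    (T : Fin m → ℝ → ℝ) (hT : ∀ j x, T j x = (x - a j) / r j)
    (K : Set ℝ) (hKne : K.Nonempty) (hKc : IsCompact K)
    (hK : K = ⋃ j, f j '' K)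
    (U : Set ℝ)
    (hU : U = {x | x ∈ K ∧ ∃! i : ℕ → Fin m, Tendsto (ifsIter m f i) atTop (𝓝 x)})
    (x : ℝ) (hx : x ∈ K) :
    x ∉ U ↔ ∃ (w : List (Fin m)) (k l : Fin m), k ≠ l ∧
      T k (invIterWord m T w x) ∈ K ∧ T l (invIterWord m T w x) ∈ K :=
  stmt2_general m r a hr f hf T hT K hKc hK U hU x hx
end

section
/- Assume K = [a,b] is a nondegenerate interval. Then U is a closed subset of ℝ if and only if Ũ is a subshift of finite type. -/
open Filter Topology Set

/-! ### Auxiliary definitions and lemmas -/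

/-- shift of a sequence by `n`. -/
def shf {α : Type*} (n : ℕ) (i : ℕ → α) : ℕ → α := fun k => i (k + n)

/-- prepend a letter to a sequence. -/
def conss {α : Type*} (d : α) (w : ℕ → α) : ℕ → α := fun k => Nat.casesOn k d w

lemma shf_shf {α : Type*} (p q : ℕ) (i : ℕ → α) : shf p (shf q i) = shf (p + q) i :=
  funext fun k => congrArg i (by omega)

/-- `pt m f i n x = f_{i₁} ∘ ⋯ ∘ f_{iₙ} (x)`. -/
noncomputable def pt (m : ℕ) (f : Fin m → ℝ → ℝ) : (ℕ → Fin m) → ℕ → ℝ → ℝ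
  | _, 0, x => x
  | i, n + 1, x => f (i 0) (pt m f (shf 1 i) n x)

section
variable {m : ℕ} {f : Fin m → ℝ → ℝ} {r a : Fin m → ℝ}

lemma pt_succ (i : ℕ → Fin m) (n : ℕ) (x : ℝ) :
    pt m f i (n+1) x = f (i 0) (pt m f (shf 1 i) n x) := rfl

lemma iter_eq_pt (i : ℕ → Fin m) (n : ℕ) : ifsIter m f i n = pt m f i n 0 := by
  induction n generalizing i with
  | zero => rfl
  | succ n IH => rw [pt_succ]; show f (i 0) _ = _; rw [IH]; rfl

lemma pt_congr : ∀ (n : ℕ) (i j : ℕ → Fin m) (x : ℝ), (∀ k < n, i k = j k) →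
    pt m f i n x = pt m f j n x := by
  intro n
  induction n with
  | zero => intros; rfl
  | succ n IH =>
    intro i j x h
    rw [pt_succ, pt_succ, h 0 (Nat.succ_pos n),
      IH (shf 1 i) (shf 1 j) x (fun k hk => h (k+1) (by omega))]

lemma pt_snoc : ∀ (n : ℕ) (i : ℕ → Fin m) (x : ℝ),
    pt m f i (n+1) x = pt m f i n (f (i n) x) := by
  intro n
  induction n with
  | zero => intros; rfl
  | succ n IH =>
    intro i x
    rw [pt_succ, IH (shf 1 i) x]
    rfl

lemma pt_lip (hf : ∀ j x, f j x = r j * x + a j) {ρ : ℝ} (hr0 : ∀ j, 0 < r j)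
    (hρ : ∀ j, r j ≤ ρ) : ∀ (n : ℕ) (i : ℕ → Fin m) (x y : ℝ),
    |pt m f i n x - pt m f i n y| ≤ ρ ^ n * |x - y| := by
  intro n
  induction n with
  | zero => intro i x y; simp [pt]
  | succ n IH =>
    intro i x y
    have h0 : 0 ≤ ρ := le_trans (hr0 (i 0)).le (hρ (i 0))
    rw [pt_succ, pt_succ, hf, hf]
    have he : r (i 0) * pt m f (shf 1 i) n x + a (i 0) -
        (r (i 0) * pt m f (shf 1 i) n y + a (i 0)) =
        r (i 0) * (pt m f (shf 1 i) n x - pt m f (shf 1 i) n y) := by ring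
    rw [he, abs_mul, abs_of_pos (hr0 _)]
    calc r (i 0) * |pt m f (shf 1 i) n x - pt m f (shf 1 i) n y|
        ≤ ρ * (ρ ^ n * |x - y|) :=
          mul_le_mul (hρ _) (IH _ _ _) (abs_nonneg _) h0
      _ = ρ ^ (n+1) * |x - y| := by ring

lemma pt_inj (hf : ∀ j x, f j x = r j * x + a j) (hr0 : ∀ j, 0 < r j) :
    ∀ (n : ℕ) (i : ℕ → Fin m) (x y : ℝ), pt m f i n x = pt m f i n y → x = y := by
  intro n
  induction n with
  | zero => intro i x y h; exact h
  | succ n IH =>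
    intro i x y h
    apply IH (shf 1 i) x y
    rw [pt_succ, pt_succ, hf, hf] at h
    exact mul_left_cancel₀ (hr0 (i 0)).ne' (by linarith)

lemma pt_memK {K : Set ℝ} (hKattr : K = ⋃ j, f j '' K) :
    ∀ (n : ℕ) (i : ℕ → Fin m) {x : ℝ}, x ∈ K → pt m f i n x ∈ K := by
  have hsub : ∀ j, f j '' K ⊆ K := fun j =>
    (subset_iUnion (fun j => f j '' K) j).trans hKattr.ge
  intro n
  induction n with
  | zero => intro i x hx; exact hx
  | succ n IH => intro i x hx; exact hsub (i 0) (Set.mem_image_of_mem _ (IH _ hx))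

end

/-- for an IFS whose attractor is a nondegenerate interval, the univoque
set `U` is closed iff the set of unique codings `Ũ` is a subshift of finite type. -/
theorem stmt5 (m : ℕ) (hm : 2 ≤ m) (r a : Fin m → ℝ)
    (hr : ∀ j, 0 < r j ∧ r j < 1)
    (f : Fin m → ℝ → ℝ) (hf : ∀ j x, f j x = r j * x + a j)
    (A B : ℝ) (hAB : A < B)
    (K : Set ℝ) (hK : K = Icc A B) (hKattr : K = ⋃ j, f j '' K)
    (proj : (ℕ → Fin m) → ℝ)
    (hproj : ∀ i : ℕ → Fin m, Tendsto (ifsIter m f i) atTop (𝓝 (proj i)))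
    (U : Set ℝ)
    (hU : U = {x | x ∈ K ∧ ∃! i : ℕ → Fin m, Tendsto (ifsIter m f i) atTop (𝓝 x)})
    (Ut : Set (ℕ → Fin m)) (hUt : Ut = proj ⁻¹' U) :
    IsClosed U ↔ ∃ (L : ℕ) (F : Finset (Fin L → Fin m)),
      Ut = {x : ℕ → Fin m | ∀ k : ℕ, (fun j : Fin L => x (k + j)) ∉ F} := by
  classical
  have hm0 : 0 < m := by omega
  haveI : Nonempty (Fin m) := ⟨⟨0, hm0⟩⟩
  -- the contraction ratio bound
  set ρ : ℝ := Finset.univ.sup' Finset.univ_nonempty r with hρdef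
  have hρle : ∀ j, r j ≤ ρ := fun j => Finset.le_sup' r (Finset.mem_univ j)
  have hρ1 : ρ < 1 := (Finset.sup'_lt_iff _).2 fun j _ => (hr j).2
  have hρ0 : 0 ≤ ρ := le_trans (hr ⟨0, hm0⟩).1.le (hρle _)
  have hr0 : ∀ j, 0 < r j := fun j => (hr j).1
  have hfc : ∀ j, Continuous (f j) := fun j => by
    have : f j = fun x => r j * x + a j := funext (hf j)
    rw [this]; fun_prop
  have hKc : IsClosed K := by rw [hK]; exact isClosed_Icc
  have hKcpt : IsCompact K := by rw [hK]; exact isCompact_Icc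
  have habs : ∀ u ∈ K, ∀ v ∈ K, |u - v| ≤ B - A := by
    rw [hK]; rintro u ⟨hu1, hu2⟩ v ⟨hv1, hv2⟩
    rw [abs_sub_le_iff]; constructor <;> linarith
  have hlip := pt_lip (r := r) (a := a) hf hr0 hρle
  have hinj := pt_inj (r := r) (a := a) hf hr0
  have hmemK := pt_memK (f := f) hKattr
  -- basic identities for proj
  have hconsP : ∀ i : ℕ → Fin m, proj i = f (i 0) (proj (shf 1 i)) := by
    intro i
    refine tendsto_nhds_unique ((hproj i).comp (tendsto_add_atTop_nat 1)) ?_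
    exact ((hfc (i 0)).tendsto _).comp (hproj (shf 1 i))
  have hptP : ∀ (n : ℕ) (i : ℕ → Fin m), proj i = pt m f i n (proj (shf n i)) := by
    intro n
    induction n with
    | zero => intro i; rfl
    | succ n IH =>
      intro i
      rw [pt_succ, ← shf_shf n 1 i, ← IH (shf 1 i)]
      exact hconsP i
  -- proj lands in K
  have hprojK : ∀ i, proj i ∈ K := by
    intro i
    have hA : A ∈ K := by rw [hK]; exact ⟨le_rfl, hAB.le⟩
    have hb : ∀ n, |pt m f i n A - ifsIter m f i n| ≤ ρ ^ n * |A| := by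
      intro n; rw [iter_eq_pt]
      simpa using hlip n i A 0
    have h0 : Tendsto (fun n => pt m f i n A - ifsIter m f i n) atTop (𝓝 0) :=
      squeeze_zero_norm hb
        (by simpa using (tendsto_pow_atTop_nhds_zero_of_lt_one hρ0 hρ1).mul_const |A|)
    have h1 : Tendsto (fun n => pt m f i n A) atTop (𝓝 (proj i)) := by
      have := h0.add (hproj i)
      simpa using this
    exact hKc.mem_of_tendsto h1 (Filter.Eventually.of_forall fun n => hmemK n i hA)
  -- proj is onto K
  have hsurj : ∀ x ∈ K, ∃ i, proj i = x := by
    intro x hx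
    have hstep : ∀ y : K, ∃ p : Fin m × K, (y : ℝ) = f p.1 p.2 := by
      rintro ⟨y, hy⟩
      have hy' : y ∈ ⋃ j, f j '' K := hKattr ▸ hy
      obtain ⟨j, u, hu, he⟩ := by simpa [Set.mem_iUnion] using hy'
      exact ⟨(j, ⟨u, hu⟩), he.symm⟩
    choose g hg using hstep
    set s : ℕ → K := fun n => (fun y => (g y).2)^[n] ⟨x, hx⟩ with hs
    set i : ℕ → Fin m := fun n => (g (s n)).1 with hi
    have hsucc : ∀ n, s (n+1) = (g (s n)).2 := fun n =>
      Function.iterate_succ_apply' (fun y => (g y).2) n ⟨x, hx⟩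
    have key : ∀ n, x = pt m f i n (s n) := by
      intro n
      induction n with
      | zero => rfl
      | succ n IH =>
        rw [pt_snoc]
        have h2 : f (i n) ((s (n+1) : K) : ℝ) = (s n : ℝ) := by
          rw [hsucc]; exact (hg (s n)).symm
        rw [h2]; exact IH
    set M := max |A| |B| with hM
    have hMle : ∀ y : K, |(y : ℝ)| ≤ M := by
      rintro ⟨y, hy⟩; rw [hK] at hy; exact abs_le_max_abs_abs hy.1 hy.2
    have hb : ∀ n, |x - ifsIter m f i n| ≤ ρ ^ n * M := by
      intro n; rw [iter_eq_pt]
      calc |x - pt m f i n 0| = |pt m f i n (s n) - pt m f i n 0| := by rw [← key n]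
        _ ≤ ρ ^ n * |((s n : K) : ℝ) - 0| := hlip n i _ 0
        _ ≤ ρ ^ n * M := by
            rw [sub_zero]
            exact mul_le_mul_of_nonneg_left (hMle _) (pow_nonneg hρ0 n)
    have h0 : Tendsto (fun n => x - ifsIter m f i n) atTop (𝓝 0) :=
      squeeze_zero_norm hb
        (by simpa using (tendsto_pow_atTop_nhds_zero_of_lt_one hρ0 hρ1).mul_const M)
    have h2 : Tendsto (ifsIter m f i) atTop (𝓝 x) := by
      have := tendsto_const_nhds (x := x) (f := atTop (α := ℕ)) |>.sub h0
      simpa using this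
    exact ⟨i, tendsto_nhds_unique (hproj i) h2⟩
  -- the membership criterion for U in terms of proj
  have hU2 : ∀ x, x ∈ U ↔ x ∈ K ∧ ∃! i : ℕ → Fin m, proj i = x := by
    intro x; rw [hU]; simp only [Set.mem_setOf_eq]
    exact and_congr_right fun _ => existsUnique_congr fun i =>
      ⟨fun h => tendsto_nhds_unique (hproj i) h, fun h => h ▸ hproj i⟩
  -- tails of univoque codings are univoque
  have hstep1 : ∀ i : ℕ → Fin m, proj i ∈ U → proj (shf 1 i) ∈ U := by
    intro i hi
    obtain ⟨w, hw, hwu⟩ := ((hU2 _).1 hi).2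
    refine (hU2 _).2 ⟨hprojK _, shf 1 i, rfl, ?_⟩
    intro j hj
    have hcons : proj (conss (i 0) j) = proj i := by
      rw [hconsP (conss (i 0) j)]
      show f (i 0) (proj j) = proj i
      rw [hj]; exact (hconsP i).symm
    have hii : conss (i 0) j = i := (hwu _ hcons).trans (hwu _ rfl).symm
    have : shf 1 (conss (i 0) j) = shf 1 i := by rw [hii]
    exact this
  have htail : ∀ (i : ℕ → Fin m), proj i ∈ U → ∀ n, proj (shf n i) ∈ U := by
    intro i hi n
    induction n with
    | zero => exact hi
    | succ n IH =>
      have := hstep1 _ IH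
      rwa [shf_shf, Nat.add_comm 1 n] at this
  -- the overlap set O
  set O : Set ℝ := ⋃ p : Fin m × Fin m,
    (if p.1 = p.2 then (∅ : Set ℝ) else f p.1 '' K ∩ f p.2 '' K) with hOdef
  have hOmem : ∀ y, y ∈ O ↔ ∃ j k, j ≠ k ∧ y ∈ f j '' K ∧ y ∈ f k '' K := by
    intro y
    rw [hOdef]
    simp only [Set.mem_iUnion]
    constructor
    · rintro ⟨p, hp⟩
      by_cases h : p.1 = p.2
      · rw [if_pos h] at hp; exact absurd hp (Set.notMem_empty y)
      · rw [if_neg h] at hp; exact ⟨p.1, p.2, h, hp.1, hp.2⟩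
    · rintro ⟨j, k, h, h1, h2⟩
      exact ⟨(j, k), by rw [if_neg h]; exact ⟨h1, h2⟩⟩
  have hOcpt : IsCompact O := by
    rw [hOdef]
    apply isCompact_iUnion
    intro p
    by_cases h : p.1 = p.2
    · rw [if_pos h]; exact isCompact_empty
    · rw [if_neg h]
      exact (hKcpt.image (hfc p.1)).inter_right (hKcpt.image (hfc p.2)).isClosed
  -- points in O have at least two codings
  have hOU : ∀ y ∈ O, y ∉ U := by
    intro y hy hyU
    obtain ⟨j, k, hjk, ⟨u, hu, hju⟩, ⟨v, hv, hkv⟩⟩ := (hOmem y).1 hy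
    obtain ⟨α, hα⟩ := hsurj u hu
    obtain ⟨β, hβ⟩ := hsurj v hv
    obtain ⟨w, hw, hwu⟩ := ((hU2 y).1 hyU).2
    have hp1 : proj (conss j α) = y := by
      rw [hconsP (conss j α)]
      show f j (proj α) = y
      rw [hα]; exact hju
    have hp2 : proj (conss k β) = y := by
      rw [hconsP (conss k β)]
      show f k (proj β) = y
      rw [hβ]; exact hkv
    have : conss j α = conss k β := (hwu _ hp1).trans (hwu _ hp2).symm
    exact hjk (congrFun this 0)
  -- a point with two codings has a tail in O
  have hdiffO : ∀ i j : ℕ → Fin m, proj j = proj i → j ≠ i →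
      ∃ n, proj (shf n i) ∈ O := by
    intro i j hj hne
    have hex : ∃ n, j n ≠ i n := Function.ne_iff.1 hne
    set n := Nat.find hex with hn
    have hspec : j n ≠ i n := Nat.find_spec hex
    have hmin : ∀ k < n, j k = i k := fun k hk => not_not.1 (Nat.find_min hex hk)
    have e1 : proj i = pt m f i n (proj (shf n i)) := hptP n i
    have e2 : proj j = pt m f i n (proj (shf n j)) := by
      rw [hptP n j]; exact pt_congr n j i _ hmin
    have heq : proj (shf n j) = proj (shf n i) := by
      apply hinj n i
      rw [← e2, hj, e1]
    have hsh0 : ∀ w : ℕ → Fin m, shf n w 0 = w n := fun w => congrArg w (Nat.zero_add n)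
    have hyi : proj (shf n i) ∈ f (i n) '' K := by
      have h1 := hconsP (shf n i)
      rw [hsh0 i] at h1
      exact ⟨proj (shf 1 (shf n i)), hprojK _, h1.symm⟩
    have hyj : proj (shf n i) ∈ f (j n) '' K := by
      have h1 := hconsP (shf n j)
      rw [hsh0 j] at h1
      rw [← heq]
      exact ⟨proj (shf 1 (shf n j)), hprojK _, h1.symm⟩
    exact ⟨n, (hOmem _).2 ⟨i n, j n, fun h => hspec h.symm, hyi, hyj⟩⟩
  have hfind : ∀ i : ℕ → Fin m, proj i ∉ U → ∃ n, proj (shf n i) ∈ O := by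
    intro i hpU
    have hne : ∃ j, proj j = proj i ∧ j ≠ i := by
      by_contra hcon
      push_neg at hcon
      exact hpU ((hU2 _).2 ⟨hprojK i, i, rfl, fun j hj => hcon j hj⟩)
    obtain ⟨j, hj, hjne⟩ := hne
    exact hdiffO i j hj hjne
  -- U is the image of Ut
  have hUimg : U = proj '' Ut := by
    apply Set.Subset.antisymm
    · intro x hx
      obtain ⟨i, hi, -⟩ := ((hU2 x).1 hx).2
      exact ⟨i, by rw [hUt, Set.mem_preimage, hi]; exact hx, hi⟩
    · rintro x ⟨i, hi, rfl⟩
      rw [hUt] at hi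
      exact hi
  constructor
  · -- U closed → subshift of finite type
    intro hUclosed
    by_cases hUe : U = ∅
    · refine ⟨0, Finset.univ, ?_⟩
      rw [hUt, hUe, Set.preimage_empty]
      ext x
      exact ⟨fun h => absurd h (Set.notMem_empty x),
        fun h => absurd (Finset.mem_univ _) (h 0)⟩
    by_cases hOe : O = ∅
    · refine ⟨0, ∅, ?_⟩
      rw [hUt]
      ext i
      simp only [Set.mem_preimage, Set.mem_setOf_eq, Finset.notMem_empty,
        not_false_eq_true, implies_true, iff_true]
      refine (hU2 _).2 ⟨hprojK i, i, rfl, ?_⟩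
      intro j hj
      by_contra hne
      obtain ⟨n, hn⟩ := hdiffO i j hj hne
      rw [hOe] at hn
      exact hn
    · have hUne : U.Nonempty := Set.nonempty_iff_ne_empty.2 hUe
      have hOne : O.Nonempty := Set.nonempty_iff_ne_empty.2 hOe
      obtain ⟨y0, hy0, hminO⟩ :=
        hOcpt.exists_isMinOn hOne (Metric.continuous_infDist_pt U).continuousOn
      set ε := Metric.infDist y0 U with hε
      have hεpos : 0 < ε := by
        rcases lt_or_eq_of_le (Metric.infDist_nonneg (s := U) (x := y0)) with h | h
        · exact h
        · exact absurd ((hUclosed.mem_iff_infDist_zero hUne).2 h.symm) (hOU y0 hy0)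
      have hεle : ∀ y ∈ O, ∀ u ∈ U, ε ≤ |y - u| := by
        intro y hy u hu
        calc ε ≤ Metric.infDist y U := hminO hy
          _ ≤ dist y u := Metric.infDist_le_dist_of_mem hu
          _ = |y - u| := Real.dist_eq y u
      obtain ⟨L, hL⟩ : ∃ L, ρ ^ L * (B - A) < ε :=
        (((tendsto_pow_atTop_nhds_zero_of_lt_one hρ0 hρ1).mul_const (B - A)).eventually
          (by simpa using gt_mem_nhds hεpos)).exists
      set padw : (Fin L → Fin m) → ℕ → Fin m :=
        fun w k => if h : k < L then w ⟨k, h⟩ else ⟨0, hm0⟩ with hpadw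
      set F : Finset (Fin L → Fin m) :=
        Finset.univ.filter (fun w => ∀ u ∈ K, pt m f (padw w) L u ∉ U) with hF
      have hFmem : ∀ w, w ∈ F ↔ ∀ u ∈ K, pt m f (padw w) L u ∉ U := by
        intro w; rw [hF, Finset.mem_filter]; simp
      have hwind : ∀ (i : ℕ → Fin m) (k : ℕ) (t : ℕ), t < L →
          padw (fun j : Fin L => i (k + j)) t = shf k i t := by
        intro i k t ht
        rw [hpadw]
        simp only [dif_pos ht]
        exact congrArg i (by omega)
      refine ⟨L, F, ?_⟩
      rw [hUt]
      ext i
      simp only [Set.mem_preimage, Set.mem_setOf_eq]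
      constructor
      · intro hiU k hkF
        have hprop := (hFmem _).1 hkF (proj (shf (L + k) i)) (hprojK _)
        apply hprop
        have : pt m f (padw fun j : Fin L => i (k + ↑j)) L (proj (shf (L + k) i)) =
            proj (shf k i) := by
          rw [pt_congr L _ (shf k i) _ (hwind i k), ← shf_shf L k i]
          exact (hptP L (shf k i)).symm
        rw [this]
        exact htail i hiU k
      · intro h
        by_contra hpU
        obtain ⟨n, hn⟩ := hfind i hpU
        apply h n
        rw [hFmem]
        intro u hu hcon
        have hz : pt m f (padw fun j : Fin L => i (n + ↑j)) L u = pt m f (shf n i) L u :=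
          pt_congr L _ (shf n i) _ (hwind i n)
        rw [hz] at hcon
        have hy : proj (shf n i) = pt m f (shf n i) L (proj (shf (L + n) i)) := by
          rw [← shf_shf L n i]; exact hptP L (shf n i)
        have hle : |proj (shf n i) - pt m f (shf n i) L u| ≤ ρ ^ L * (B - A) := by
          rw [hy]
          calc |pt m f (shf n i) L (proj (shf (L + n) i)) - pt m f (shf n i) L u|
              ≤ ρ ^ L * |proj (shf (L + n) i) - u| := hlip L _ _ _
            _ ≤ ρ ^ L * (B - A) :=
              mul_le_mul_of_nonneg_left (habs _ (hprojK _) u hu) (pow_nonneg hρ0 L)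
        have := hεle _ hn _ hcon
        linarith
  · -- subshift of finite type → U closed
    rintro ⟨L, F, hFeq⟩
    have hUtclosed : IsClosed Ut := by
      rw [hFeq]
      have : {x : ℕ → Fin m | ∀ k : ℕ, (fun j : Fin L => x (k + j)) ∉ F} =
          ⋂ k : ℕ, (fun (x : ℕ → Fin m) (j : Fin L) => x (k + (j : ℕ))) ⁻¹'
            ((↑F : Set (Fin L → Fin m))ᶜ) := by
        ext x
        simp [Set.mem_iInter, Set.mem_preimage]
      rw [this]
      refine isClosed_iInter fun k => IsClosed.preimage ?_ (Set.toFinite _).isClosed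
      exact continuous_pi (fun j : Fin L => continuous_apply (k + (j : ℕ)))
    have hUtcpt : IsCompact Ut := hUtclosed.isCompact
    have hcont : Continuous proj := by
      rw [continuous_iff_continuousAt]
      intro i
      apply Metric.tendsto_nhds.2
      intro ε hε
      obtain ⟨n, hn⟩ : ∃ n, ρ ^ n * (B - A) < ε :=
        (((tendsto_pow_atTop_nhds_zero_of_lt_one hρ0 hρ1).mul_const (B - A)).eventually
          (by simpa using gt_mem_nhds hε)).exists
      have hopen : IsOpen {j : ℕ → Fin m | ∀ k < n, j k = i k} := by
        have hset : {j : ℕ → Fin m | ∀ k < n, j k = i k} =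
            (fun (x : ℕ → Fin m) (k : Fin n) => x (k : ℕ)) ⁻¹'
              {fun k : Fin n => i (k : ℕ)} := by
          ext j
          simp only [Set.mem_setOf_eq, Set.mem_preimage, Set.mem_singleton_iff, funext_iff]
          constructor
          · intro h k; exact h k k.isLt
          · intro h k hk; exact h ⟨k, hk⟩
        rw [hset]
        exact (isOpen_discrete _).preimage (continuous_pi fun k => continuous_apply _)
      filter_upwards [hopen.mem_nhds (fun k _ => rfl)] with j hj
      rw [Real.dist_eq]
      have h1 : proj i = pt m f j n (proj (shf n i)) := by
        rw [hptP n i]; exact pt_congr n i j _ (fun k hk => (hj k hk).symm)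
      calc |proj j - proj i|
          = |pt m f j n (proj (shf n j)) - pt m f j n (proj (shf n i))| := by
            rw [← hptP n j, ← h1]
        _ ≤ ρ ^ n * |proj (shf n j) - proj (shf n i)| := hlip n j _ _
        _ ≤ ρ ^ n * (B - A) :=
            mul_le_mul_of_nonneg_left (habs _ (hprojK _) _ (hprojK _)) (pow_nonneg hρ0 n)
        _ < ε := hn
    have hcpt : IsCompact U := by
      rw [hUimg]; exact hUtcpt.image hcont
    exact hcpt.isClosed
end

section
/- For Lebesgue-almost every β ∈ (1,∞) there exists M ∈ ℕ such that (ε_{M+n})_{n≥1} > (α_n)_{n≥1} in the lexicographic order, where (α_n) is the greedy expansion of 1 in base β and ε_n = ⌈β⌉−1−α_n. -/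
/-!
Write `N = ⌊β⌋` and let `Gⁿ(1)` be the orbit of `1`. If `Gⁿ(1)` comes arbitrarily close to `0`,
the expansion of `1` contains arbitrarily long blocks of zeros. Since `α` starts with a block of
digits `N` ended by a smaller digit, the complementary sequence `ε = N - α` beats `α`
lexicographically after the start `M` of a long enough block of zeros.

So it suffices that for almost every `β ∈ (N, N + 1)` the orbit of `1` is not bounded below by a
`δ > 0`, and this follows from the Lebesgue density theorem. Near a point `β₀` of that set, for
`β ∈ [l, β₀]` the iterate `Gⁿ_β(1)` equals the polynomial `βⁿ - d₀βⁿ⁻¹ - ⋯ - dₙ₋₁` built from the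
digits of `β₀` as long as these polynomials stay in `[0, 1)` on `[l, β₀]`. They stretch
`[l, β₀]` by a factor at least `lⁿ⁻¹`, so at some first step one of them changes sign on
`[l, β₀]`, and just to the right of its zero an interval of length comparable to `β₀ - l`
consists of `β` with `G_β^{n+1}(1) < δ`.
-/

open Filter Topology Set MeasureTheory

/-- The greedy map `G(x) = βx mod 1` on `[0,1)` and `G(x) = βx − ⌊β⌋` on
`[1, (⌈β⌉−1)/(β−1)]`. -/
noncomputable def greedyMap (β : ℝ) (x : ℝ) : ℝ :=
  if x < 1 then β * x - ⌊β * x⌋ else β * x - ⌊β⌋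

/-- The digits of the greedy expansion: `a_{n+1}(x) = ⌊β · Gⁿ(x)⌋` (0-indexed). -/
noncomputable def greedyDigit (β : ℝ) (x : ℝ) (n : ℕ) : ℤ :=
  ⌊β * (greedyMap β)^[n] x⌋

/-- Strict lexicographic order on sequences. -/
def LexLt (u v : ℕ → ℤ) : Prop :=
  ∃ M : ℕ, (∀ n < M, u n = v n) ∧ u M < v M

open Real

lemma volume_inter_closedBall_div_le {s : Set ℝ} {x r a c : ℝ} (hr : 0 < r) (hc : 0 ≤ c)
    (ha : Ico a (a + c * r) ⊆ Metric.closedBall x r \ s) :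
    volume (s ∩ Metric.closedBall x r) / volume (Metric.closedBall x r) ≤
      ENNReal.ofReal (1 - c / 2) := by
  have hdisj : Disjoint (s ∩ Metric.closedBall x r) (Ico a (a + c * r)) :=
    Set.disjoint_left.2 fun y hy hya => (ha hya).2 hy.1
  have hsum : volume (s ∩ Metric.closedBall x r) + ENNReal.ofReal (c * r) ≤
      ENNReal.ofReal (2 * r) := by
    rw [← Real.volume_closedBall, ← add_sub_cancel_left a (c * r), ← Real.volume_Ico,
      ← measure_union hdisj measurableSet_Ico]
    exact measure_mono (union_subset inter_subset_right fun y hy => (ha hy).1)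
  have hle : volume (s ∩ Metric.closedBall x r) ≤ ENNReal.ofReal ((2 - c) * r) := by
    rw [sub_mul, ENNReal.ofReal_sub _ (by positivity)]
    exact ENNReal.le_sub_of_add_le_right ENNReal.ofReal_ne_top hsum
  calc volume (s ∩ Metric.closedBall x r) / volume (Metric.closedBall x r)
      ≤ ENNReal.ofReal ((2 - c) * r) / ENNReal.ofReal (2 * r) := by
        rw [Real.volume_closedBall]; gcongr
    _ = ENNReal.ofReal (1 - c / 2) := by
        rw [← ENNReal.ofReal_div_of_pos (by positivity)]
        congr 1
        field_simp

theorem volume_eq_zero_of_forall_eventually_exists_Ico {s : Set ℝ}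
    (h : ∀ x ∈ s, ∃ c > 0, ∀ᶠ r in 𝓝[>] 0,
      ∃ a, Ico a (a + c * r) ⊆ Metric.closedBall x r \ s) :
    volume s = 0 := by
  rw [← Measure.restrict_apply_self]
  refine measure_mono_null (fun x hx => ?_)
    (ae_iff.1 (Besicovitch.ae_tendsto_measure_inter_div volume s))
  intro hdens
  obtain ⟨c, hc, hgap⟩ := h x hx
  have hlt : ENNReal.ofReal (1 - c / 2) < 1 := ENNReal.ofReal_lt_one.2 (by linarith)
  obtain ⟨r, hr_dens, ⟨a, ha⟩, hr⟩ :=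
    ((hdens.eventually (lt_mem_nhds hlt)).and (hgap.and self_mem_nhdsWithin)).exists
  exact hr_dens.not_ge (volume_inter_closedBall_div_le hr hc.le ha)

lemma pow_mul_sub_le_exp {l β : ℝ} {k : ℕ} (hl : 1 < l) (hlβ : l ≤ β)
    (h : l ^ k * (β - l) ≤ 1) : β ^ k * (β - l) ≤ exp (1 / (l - 1)) := by
  have hbern : 1 + k * (l - 1) ≤ l ^ k := by
    simpa using one_add_mul_le_pow (a := l - 1) (by linarith) k
  have hk : k * (β - l) ≤ 1 / (l - 1) := by
    rw [le_div_iff₀ (by linarith)]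
    nlinarith [sub_nonneg.2 hlβ]
  have hβ : β ≤ l * exp (β - l) := by nlinarith [add_one_le_exp (β - l)]
  calc β ^ k * (β - l) ≤ (l * exp (β - l)) ^ k * (β - l) := by
        gcongr
        linarith
    _ = l ^ k * (β - l) * exp (k * (β - l)) := by rw [mul_pow, exp_nat_mul]; ring
    _ ≤ 1 * exp (1 / (l - 1)) := by gcongr
    _ = exp (1 / (l - 1)) := one_mul _

lemma mul_sub_le_div_geom_sum {l β δ : ℝ} {k : ℕ} (hδ : 0 ≤ δ) (hl : 1 < l) (hlβ : l ≤ β)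
    (h : l ^ k * (β - l) ≤ 1) :
    δ * (β - 1) / (β ^ 2 * exp (1 / (l - 1))) * (β - l) ≤
      δ / ∑ i ∈ Finset.range (k + 2), β ^ i := by
  have hgeom : (∑ i ∈ Finset.range (k + 2), β ^ i) * (β - 1) ≤ β ^ (k + 2) := by
    rw [geom_sum_mul]; linarith
  have hexp := pow_mul_sub_le_exp hl hlβ h
  rw [div_mul_eq_mul_div, div_le_div_iff₀ (mul_pos (pow_pos (by linarith) 2) (exp_pos _))
    (geom_sum_pos (by linarith) (by omega))]
  calc δ * (β - 1) * (β - l) * ∑ i ∈ Finset.range (k + 2), β ^ i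
      = δ * ((∑ i ∈ Finset.range (k + 2), β ^ i) * (β - 1) * (β - l)) := by ring
    _ ≤ δ * (β ^ (k + 2) * (β - l)) := by gcongr
    _ = δ * (β ^ 2 * (β ^ k * (β - l))) := by ring
    _ ≤ δ * (β ^ 2 * exp (1 / (l - 1))) := by gcongr

noncomputable def greedyOrbit (β : ℝ) (n : ℕ) : ℝ := (greedyMap β)^[n] 1

section GreedyOrbit

variable {β : ℝ}

lemma greedyOrbit_succ (β : ℝ) (n : ℕ) : greedyOrbit β (n + 1) = greedyMap β (greedyOrbit β n) :=
  Function.iterate_succ_apply' _ _ _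

lemma greedyOrbit_one (β : ℝ) : greedyOrbit β 1 = Int.fract β := by
  simp [greedyOrbit, greedyMap]

lemma greedyDigit_one_eq (β : ℝ) (n : ℕ) : greedyDigit β 1 n = ⌊β * greedyOrbit β n⌋ := rfl

lemma greedyDigit_one_zero (β : ℝ) : greedyDigit β 1 0 = ⌊β⌋ := by
  simp [greedyDigit_one_eq, greedyOrbit]

lemma greedyOrbit_mem_Ico (β : ℝ) {n : ℕ} (hn : 1 ≤ n) : greedyOrbit β n ∈ Ico 0 1 := by
  induction n, hn using Nat.le_induction with
  | base => exact greedyOrbit_one β ▸ ⟨Int.fract_nonneg β, Int.fract_lt_one β⟩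
  | succ n _ ih =>
    rw [greedyOrbit_succ, greedyMap, if_pos ih.2]
    exact ⟨Int.fract_nonneg _, Int.fract_lt_one _⟩

lemma greedyOrbit_nonneg (β : ℝ) (n : ℕ) : 0 ≤ greedyOrbit β n := by
  rcases n with _ | n
  · exact zero_le_one
  · exact (greedyOrbit_mem_Ico β n.succ_pos).1

lemma greedyOrbit_le_one (β : ℝ) (n : ℕ) : greedyOrbit β n ≤ 1 := by
  rcases n with _ | n
  · exact le_rfl
  · exact (greedyOrbit_mem_Ico β n.succ_pos).2.le

lemma greedyOrbit_succ_eq (β : ℝ) (n : ℕ) :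
    greedyOrbit β (n + 1) = β * greedyOrbit β n - greedyDigit β 1 n := by
  rcases n with _ | n
  · rw [greedyOrbit_one, greedyDigit_one_eq, greedyOrbit, Function.iterate_zero_apply, mul_one,
      Int.fract]
  · rw [greedyOrbit_succ, greedyMap, if_pos (greedyOrbit_mem_Ico β n.succ_pos).2,
      greedyDigit_one_eq]

lemma greedyDigit_one_le_floor (hβ : 0 ≤ β) (n : ℕ) : greedyDigit β 1 n ≤ ⌊β⌋ :=
  Int.floor_mono (mul_le_of_le_one_right hβ (greedyOrbit_le_one β n))

end GreedyOrbit

section Pointwise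

variable {β : ℝ} {N : ℤ}

lemma exists_greedyDigit_one_lt (hN : 1 ≤ N) (hβ : β ∈ Ioo (N : ℝ) (N + 1)) :
    ∃ j, 1 ≤ j ∧ greedyDigit β 1 j < N := by
  have hfloor : ⌊β⌋ = N := Int.floor_eq_iff.2 ⟨hβ.1.le, hβ.2⟩
  have hβ1 : (1 : ℝ) ≤ β := by linarith [hβ.1, (show (1 : ℝ) ≤ N by exact_mod_cast hN)]
  by_contra! H
  have hdigit : ∀ j, greedyDigit β 1 j = N := by
    intro j
    rcases j with _ | j
    · exact greedyDigit_one_zero β ▸ hfloor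
    · exact le_antisymm (hfloor ▸ greedyDigit_one_le_floor (by linarith) _) (H _ j.succ_pos)
  -- As `x ≤ 1`, we have `βx - N ≤ x - (N + 1 - β)`.
  have hdecay : ∀ t : ℕ, greedyOrbit β t ≤ 1 - t * (N + 1 - β) := by
    intro t
    induction t with
    | zero => simp [greedyOrbit]
    | succ t ih =>
      rw [greedyOrbit_succ_eq, hdigit]
      push_cast
      nlinarith [greedyOrbit_le_one β t]
  obtain ⟨t, ht⟩ := exists_nat_gt (1 / (N + 1 - β))
  rw [div_lt_iff₀ (by linarith [hβ.2])] at ht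
  linarith [hdecay t, greedyOrbit_nonneg β t]

lemma greedyOrbit_add_eq_pow_mul (hβ : 1 ≤ β) {n M : ℕ} (h : β ^ n * greedyOrbit β M < 1)
    {i : ℕ} (hi : i ≤ n) : greedyOrbit β (M + i) = β ^ i * greedyOrbit β M := by
  induction i with
  | zero => simp
  | succ i ih =>
    have horbit := greedyOrbit_nonneg β M
    have hsmall : β * (β ^ i * greedyOrbit β M) < 1 := by
      rw [← mul_assoc, ← pow_succ']
      exact lt_of_le_of_lt (by gcongr) h
    rw [← add_assoc, greedyOrbit_succ_eq, greedyDigit_one_eq, ih (by omega),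
      Int.floor_eq_zero_iff.2 ⟨by positivity, hsmall⟩]
    ring

lemma greedyDigit_add_eq_zero (hβ : 1 ≤ β) {n M : ℕ} (h : β ^ n * greedyOrbit β M < 1)
    {i : ℕ} (hi : i < n) : greedyDigit β 1 (M + i) = 0 := by
  have := greedyOrbit_add_eq_pow_mul hβ h (i := i + 1) hi
  rw [← add_assoc, greedyOrbit_succ_eq, greedyOrbit_add_eq_pow_mul hβ h hi.le, pow_succ'] at this
  exact_mod_cast (by linarith : (greedyDigit β 1 (M + i) : ℝ) = 0)

theorem exists_lexLt_of_forall_exists_greedyOrbit_lt (hN : 1 ≤ N)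
    (hβ : β ∈ Ioo (N : ℝ) (N + 1)) (h : ∀ η > 0, ∃ m, greedyOrbit β m < η) :
    ∃ M : ℕ, LexLt (greedyDigit β 1) (fun n => ⌈β⌉ - 1 - greedyDigit β 1 (M + n)) := by
  have hfloor : ⌊β⌋ = N := Int.floor_eq_iff.2 ⟨hβ.1.le, hβ.2⟩
  have hceil : ⌈β⌉ = N + 1 :=
    Int.ceil_eq_iff.2 ⟨by push_cast; linarith [hβ.1], by push_cast; linarith [hβ.2]⟩
  have hβ1 : (1 : ℝ) ≤ β := by linarith [hβ.1, (show (1 : ℝ) ≤ N by exact_mod_cast hN)]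
  have hsmall := exists_greedyDigit_one_lt hN hβ
  obtain ⟨J, ⟨-, hJ⟩, hmin⟩ : ∃ J, (1 ≤ J ∧ greedyDigit β 1 J < N) ∧
      ∀ j < J, ¬(1 ≤ j ∧ greedyDigit β 1 j < N) :=
    ⟨Nat.find hsmall, Nat.find_spec hsmall, fun _ => Nat.find_min hsmall⟩
  obtain ⟨M, hM⟩ := h (1 / β ^ (J + 1)) (by positivity)
  rw [lt_div_iff₀' (by positivity)] at hM
  have hzero : ∀ i ≤ J, greedyDigit β 1 (M + i) = 0 := fun i hi =>
    greedyDigit_add_eq_zero hβ1 hM (Nat.lt_succ_of_le hi)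
  refine ⟨M, J, fun n hn => ?_, ?_⟩
  · have hmax : greedyDigit β 1 n = N := by
      rcases n with _ | n
      · exact greedyDigit_one_zero β ▸ hfloor
      · have := hmin _ hn
        have := hfloor ▸ greedyDigit_one_le_floor (by linarith) (n + 1)
        omega
    simp only [hzero n hn.le, hceil, hmax]
    ring
  · simp only [hzero J le_rfl, hceil]
    omega

end Pointwise

/-- `βⁿ - d 0 βⁿ⁻¹ - ⋯ - d (n-1)`, the value of `Gⁿ(1)` when the greedy expansion of `1` in base
`β` starts with the digits `d 0, …, d (n-1)`. -/
noncomputable def cylinderPoly (d : ℕ → ℤ) : ℕ → ℝ → ℝ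
  | 0, _ => 1
  | n + 1, β => β * cylinderPoly d n β - d n

/-- Together with `⌊β⌋ = d 0`, this says that the greedy expansion of `1` in base `β` starts with
`d 0, …, d (n-1)`. -/
def InCylinder (d : ℕ → ℤ) (n : ℕ) (β : ℝ) : Prop :=
  ∀ j, 1 ≤ j → j ≤ n → cylinderPoly d j β ∈ Ico 0 1

section Cylinder

variable {d : ℕ → ℤ} {n : ℕ} {l β β' : ℝ}

@[simp] lemma cylinderPoly_zero (β : ℝ) : cylinderPoly d 0 β = 1 := rfl

lemma cylinderPoly_succ (n : ℕ) (β : ℝ) :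
    cylinderPoly d (n + 1) β = β * cylinderPoly d n β - d n := rfl

lemma continuous_cylinderPoly (d : ℕ → ℤ) (n : ℕ) : Continuous (cylinderPoly d n) := by
  induction n with
  | zero => exact continuous_const
  | succ n ih => exact (continuous_id.mul ih).sub continuous_const

lemma cylinderPoly_succ_sub (n : ℕ) (β β' : ℝ) :
    cylinderPoly d (n + 1) β' - cylinderPoly d (n + 1) β =
      (β' - β) * cylinderPoly d n β' + β * (cylinderPoly d n β' - cylinderPoly d n β) := by
  simp only [cylinderPoly_succ]
  ring

lemma pow_mul_sub_le_cylinderPoly_sub (hβ : 0 ≤ β) (hββ' : β ≤ β')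
    (h : ∀ i ≤ n, 0 ≤ cylinderPoly d i β') :
    β ^ n * (β' - β) ≤ cylinderPoly d (n + 1) β' - cylinderPoly d (n + 1) β := by
  induction n with
  | zero => simp [cylinderPoly_succ]
  | succ n ih =>
    have ih := ih fun i hi => h i (by omega)
    have hpos := h (n + 1) le_rfl
    rw [cylinderPoly_succ_sub, pow_succ', mul_assoc]
    nlinarith [sub_nonneg.2 hββ']

lemma cylinderPoly_mono (hβ : 0 ≤ β) (hββ' : β ≤ β') (h : ∀ i < n, 0 ≤ cylinderPoly d i β') :
    cylinderPoly d n β ≤ cylinderPoly d n β' := by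
  rcases n with _ | n
  · exact le_rfl
  · have := pow_mul_sub_le_cylinderPoly_sub hβ hββ' fun i hi => h i (Nat.lt_succ_of_le hi)
    nlinarith [pow_nonneg hβ n, sub_nonneg.2 hββ']

lemma cylinderPoly_sub_le_mul_geom_sum (hβ : 0 ≤ β) (hββ' : β ≤ β')
    (h : ∀ i < n, cylinderPoly d i β' ∈ Icc 0 1) :
    cylinderPoly d n β' - cylinderPoly d n β ≤ (β' - β) * ∑ i ∈ Finset.range n, β' ^ i := by
  induction n with
  | zero => simp
  | succ n ih =>
    have ih := ih fun i hi => h i (by omega)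
    have hmono := cylinderPoly_mono (n := n) hβ hββ' fun i hi => (h i (by omega)).1
    have hn := h n n.lt_succ_self
    rw [cylinderPoly_succ_sub, geom_sum_succ]
    nlinarith [mul_le_mul_of_nonneg_right hββ' (sub_nonneg.2 hmono),
      mul_le_mul_of_nonneg_left ih (hβ.trans hββ'),
      mul_le_mul_of_nonneg_left hn.2 (sub_nonneg.2 hββ')]

lemma InCylinder.mono {m : ℕ} (h : InCylinder d n β) (hmn : m ≤ n) : InCylinder d m β :=
  fun j hj hjm => h j hj (hjm.trans hmn)

lemma InCylinder.mem_Icc (h : InCylinder d n β) {i : ℕ} (hi : i ≤ n) :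
    cylinderPoly d i β ∈ Icc 0 1 := by
  rcases i with _ | i
  · simp
  · exact Ico_subset_Icc_self (h _ i.succ_pos hi)

lemma inCylinder_succ_iff :
    InCylinder d (n + 1) β ↔ InCylinder d n β ∧ cylinderPoly d (n + 1) β ∈ Ico 0 1 := by
  refine ⟨fun h => ⟨h.mono n.le_succ, h _ n.succ_pos le_rfl⟩, fun ⟨h, hn⟩ j hj hjn => ?_⟩
  rcases hjn.lt_or_eq with hjn | rfl
  · exact h j hj (Nat.le_of_lt_succ hjn)
  · exact hn

lemma greedyOrbit_eq_cylinderPoly (hd : ⌊β⌋ = d 0) (h : InCylinder d n β) :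
    greedyOrbit β n = cylinderPoly d n β := by
  induction n with
  | zero => rfl
  | succ n ih =>
    rw [greedyOrbit_succ_eq, ih (h.mono n.le_succ), cylinderPoly_succ, greedyDigit_one_eq,
      ih (h.mono n.le_succ)]
    rcases n with _ | n
    · simp [hd]
    · have hn := h (n + 2) (by omega) le_rfl
      rw [cylinderPoly_succ] at hn
      rw [Int.floor_eq_iff.2 ⟨by linarith [hn.1], by linarith [hn.2]⟩]

lemma cylinderPoly_greedyDigit (β : ℝ) (n : ℕ) :
    cylinderPoly (greedyDigit β 1) n β = greedyOrbit β n := by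
  induction n with
  | zero => rfl
  | succ n ih => rw [cylinderPoly_succ, ih, greedyOrbit_succ_eq]

lemma pow_mul_sub_lt_one_of_inCylinder (hl : 0 ≤ l) (hlβ : l ≤ β)
    (hl' : InCylinder d (n + 1) l) (hβ : InCylinder d (n + 1) β) : l ^ n * (β - l) < 1 := by
  have := pow_mul_sub_le_cylinderPoly_sub (n := n) hl hlβ fun i hi => (hβ.mem_Icc (by omega)).1
  linarith [(hβ _ n.succ_pos le_rfl).2, (hl' _ n.succ_pos le_rfl).1]

end Cylinder

section Gap

variable {d : ℕ → ℤ} {n : ℕ} {l β₀ δ : ℝ}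

lemma exists_inCylinder_and_not_inCylinder_succ (hl : 1 < l) (hlβ₀ : l < β₀)
    (h1 : ∀ β ∈ Icc l β₀, InCylinder d 1 β) :
    ∃ n, 1 ≤ n ∧ (∀ β ∈ Icc l β₀, InCylinder d n β) ∧
      ∃ β ∈ Icc l β₀, ¬InCylinder d (n + 1) β := by
  by_contra! H
  have hall : ∀ n, 1 ≤ n → ∀ β ∈ Icc l β₀, InCylinder d n β := fun n hn =>
    Nat.le_induction h1 H n hn
  obtain ⟨n, hn⟩ := pow_unbounded_of_one_lt (1 / (β₀ - l)) hl
  rw [div_lt_iff₀ (sub_pos.2 hlβ₀)] at hn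
  exact (pow_mul_sub_lt_one_of_inCylinder (by linarith) hlβ₀.le
    (hall _ n.succ_pos l ⟨le_rfl, hlβ₀.le⟩) (hall _ n.succ_pos β₀ ⟨hlβ₀.le, le_rfl⟩)).not_ge hn.le

lemma cylinderPoly_succ_neg_of_not_inCylinder (hl : 0 ≤ l)
    (hcyl : ∀ β ∈ Icc l β₀, InCylinder d n β) (hβ₀ : InCylinder d (n + 1) β₀)
    {β : ℝ} (hβ : β ∈ Icc l β₀) (hβn : ¬InCylinder d (n + 1) β) :
    cylinderPoly d (n + 1) l < 0 := by
  have hle : ∀ β ∈ Icc l β₀, ∀ β' ∈ Icc l β₀, β ≤ β' →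
      cylinderPoly d (n + 1) β ≤ cylinderPoly d (n + 1) β' := fun β hβ β' hβ' hββ' =>
    cylinderPoly_mono (hl.trans hβ.1) hββ' fun i hi => ((hcyl β' hβ').mem_Icc (by omega)).1
  have hneg : cylinderPoly d (n + 1) β < 0 := by
    by_contra! h0
    exact hβn (inCylinder_succ_iff.2 ⟨hcyl β hβ, h0,
      (hle β hβ β₀ ⟨hβ.1.trans hβ.2, le_rfl⟩ hβ.2).trans_lt (hβ₀ _ n.succ_pos le_rfl).2⟩)
  exact (hle l ⟨le_rfl, hβ.1.trans hβ.2⟩ β hβ hβ.1).trans_lt hneg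

lemma exists_Ico_greedyOrbit_lt (hl : 0 ≤ l) (hlβ₀ : l ≤ β₀)
    (hd : ∀ β ∈ Icc l β₀, ⌊β⌋ = d 0) (hcyl : ∀ β ∈ Icc l β₀, InCylinder d n β)
    (hβ₀ : InCylinder d (n + 1) β₀) (hneg : cylinderPoly d (n + 1) l < 0)
    (hδ : δ ≤ cylinderPoly d (n + 1) β₀) :
    ∃ q, l ≤ q ∧ q + δ / ∑ i ∈ Finset.range (n + 1), β₀ ^ i ≤ β₀ ∧
      ∀ β ∈ Ico q (q + δ / ∑ i ∈ Finset.range (n + 1), β₀ ^ i), greedyOrbit β (n + 1) < δ := by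
  set L := ∑ i ∈ Finset.range (n + 1), β₀ ^ i
  have hL : 0 < L := geom_sum_pos (hl.trans hlβ₀) n.succ_ne_zero
  have hβ₀' := hβ₀ _ n.succ_pos le_rfl
  obtain ⟨q, ⟨hlq, hqβ₀⟩, hq0⟩ := intermediate_value_Icc hlβ₀
    (continuous_cylinderPoly d (n + 1)).continuousOn ⟨hneg.le, hβ₀'.1⟩
  have hq : 0 ≤ q := hl.trans hlq
  have hupper : ∀ β ∈ Icc q β₀, cylinderPoly d (n + 1) β ≤ (β - q) * L := by
    intro β ⟨hqβ, hββ₀⟩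
    have hcylβ := hcyl β ⟨hlq.trans hqβ, hββ₀⟩
    have := cylinderPoly_sub_le_mul_geom_sum (n := n + 1) hq hqβ fun i hi =>
      hcylβ.mem_Icc (Nat.le_of_lt_succ hi)
    calc cylinderPoly d (n + 1) β ≤ (β - q) * ∑ i ∈ Finset.range (n + 1), β ^ i := by linarith
      _ ≤ (β - q) * ∑ i ∈ Finset.range (n + 1), β₀ ^ i := by gcongr with i; linarith
  have hgap : q + δ / L ≤ β₀ := by
    have := hupper β₀ ⟨hqβ₀, le_rfl⟩
    rw [← le_sub_iff_add_le', div_le_iff₀ hL]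
    linarith
  refine ⟨q, hlq, hgap, fun β ⟨hqβ, hβ⟩ => ?_⟩
  have hββ₀ : β ≤ β₀ := by linarith
  have hmem : β ∈ Icc l β₀ := ⟨hlq.trans hqβ, hββ₀⟩
  have hnonneg : 0 ≤ cylinderPoly d (n + 1) β := hq0 ▸
    cylinderPoly_mono hq hqβ fun i hi => ((hcyl β hmem).mem_Icc (by omega)).1
  have hlt : cylinderPoly d (n + 1) β < 1 := (cylinderPoly_mono (hq.trans hqβ) hββ₀
    fun i hi => (hβ₀.mem_Icc (by omega)).1).trans_lt hβ₀'.2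
  rw [greedyOrbit_eq_cylinderPoly (hd β hmem)
    (inCylinder_succ_iff.2 ⟨hcyl β hmem, hnonneg, hlt⟩)]
  calc cylinderPoly d (n + 1) β ≤ (β - q) * L := hupper β ⟨hqβ, hββ₀⟩
    _ < δ / L * L := by gcongr; linarith
    _ = δ := div_mul_cancel₀ δ hL.ne'

end Gap

theorem exists_Ico_subset_diff_of_forall_le_greedyOrbit {l β₀ δ : ℝ} (hδ : 0 ≤ δ)
    (horbit : ∀ m, δ ≤ greedyOrbit β₀ m) (hl : (⌊β₀⌋ : ℝ) < l) (hl1 : 1 < l) (hlβ₀ : l < β₀) :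
    ∃ q, Ico q (q + δ * (β₀ - 1) / (β₀ ^ 2 * exp (1 / (l - 1))) * (β₀ - l)) ⊆
      Icc l β₀ \ {β | ∀ m, δ ≤ greedyOrbit β m} := by
  set d := greedyDigit β₀ 1
  have hfloor : ∀ β ∈ Icc l β₀, ⌊β⌋ = d 0 := fun β hβ => by
    rw [show d 0 = ⌊β₀⌋ from greedyDigit_one_zero β₀]
    exact Int.floor_eq_iff.2 ⟨hl.le.trans hβ.1, hβ.2.trans_lt (Int.lt_floor_add_one β₀)⟩
  have hcyl1 : ∀ β ∈ Icc l β₀, InCylinder d 1 β := fun β hβ j hj hj1 => by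
    obtain rfl : j = 1 := by omega
    rw [cylinderPoly_succ, cylinderPoly_zero, mul_one, ← hfloor β hβ]
    exact ⟨Int.fract_nonneg β, Int.fract_lt_one β⟩
  have hcylβ₀ : ∀ n, InCylinder d n β₀ := fun n j hj _ =>
    cylinderPoly_greedyDigit β₀ j ▸ greedyOrbit_mem_Ico β₀ hj
  obtain ⟨n, hn, hcyl, β, hβ, hβn⟩ := exists_inCylinder_and_not_inCylinder_succ hl1 hlβ₀ hcyl1
  have hneg := cylinderPoly_succ_neg_of_not_inCylinder (by linarith) hcyl (hcylβ₀ _) hβ hβn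
  obtain ⟨q, hlq, hqβ₀, hq⟩ := exists_Ico_greedyOrbit_lt (by linarith) hlβ₀.le hfloor hcyl
    (hcylβ₀ _) hneg (cylinderPoly_greedyDigit β₀ (n + 1) ▸ horbit (n + 1))
  obtain ⟨k, rfl⟩ : ∃ k, n = k + 1 := ⟨n - 1, by omega⟩
  have hlen := mul_sub_le_div_geom_sum hδ hl1 hlβ₀.le (pow_mul_sub_lt_one_of_inCylinder
    (by linarith) hlβ₀.le (hcyl l ⟨le_rfl, hlβ₀.le⟩) (hcyl β₀ ⟨hlβ₀.le, le_rfl⟩)).le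
  exact ⟨q, fun β ⟨hqβ, hβ⟩ => ⟨⟨hlq.trans hqβ, by linarith⟩,
    fun hβS => (hq β ⟨hqβ, by linarith⟩).not_ge (hβS _)⟩⟩

theorem volume_setOf_forall_le_greedyOrbit {N : ℤ} (hN : 1 ≤ N) {δ : ℝ} (hδ : 0 < δ) :
    volume {β | β ∈ Ioo (N : ℝ) (N + 1) ∧ ∀ m, δ ≤ greedyOrbit β m} = 0 := by
  refine volume_eq_zero_of_forall_eventually_exists_Ico fun β₀ ⟨⟨hNβ₀, hβ₀N⟩, horbit⟩ => ?_
  have hfloor : (⌊β₀⌋ : ℝ) = N := by rw [Int.floor_eq_iff.2 ⟨hNβ₀.le, hβ₀N⟩]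
  have hN1 : (1 : ℝ) ≤ N := by exact_mod_cast hN
  set A := (N + β₀) / 2 with hA
  have hA1 : 1 < A := by linarith
  have hAβ₀ : A < β₀ := by linarith
  have hβ₀sq : 0 < β₀ ^ 2 := pow_pos (by linarith) 2
  refine ⟨δ * (β₀ - 1) / (β₀ ^ 2 * exp (1 / (A - 1))),
    div_pos (mul_pos hδ (by linarith)) (by positivity), ?_⟩
  filter_upwards [Ioo_mem_nhdsGT (show 0 < β₀ - A by linarith)] with r ⟨hr0, hrA⟩
  obtain ⟨q, hq⟩ := exists_Ico_subset_diff_of_forall_le_greedyOrbit (l := β₀ - r) hδ.le horbit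
    (by linarith) (by linarith) (by linarith)
  have hlen : δ * (β₀ - 1) / (β₀ ^ 2 * exp (1 / (A - 1))) * r ≤
      δ * (β₀ - 1) / (β₀ ^ 2 * exp (1 / (β₀ - r - 1))) * (β₀ - (β₀ - r)) := by
    rw [sub_sub_cancel]
    gcongr
    · exact mul_nonneg hδ.le (by linarith)
    · linarith
  refine ⟨q, fun β hβ => ?_⟩
  obtain ⟨⟨hlβ, hββ₀⟩, hβS⟩ := hq ⟨hβ.1, hβ.2.trans_le (by linarith)⟩
  exact ⟨Real.closedBall_eq_Icc ▸ ⟨hlβ, by linarith⟩, fun h => hβS h.2⟩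

/-- for Lebesgue-almost every `β ∈ (1,∞)` there exists `M ∈ ℕ` with
`(ε_{M+n})_{n≥1} > (α_n)_{n≥1}` lexicographically, where `(α_n)` is the greedy
expansion of `1` in base `β` and `ε_n = ⌈β⌉ − 1 − α_n`. -/
theorem stmt9 :
    ∀ᵐ β ∂(volume : Measure ℝ), β ∈ Ioi (1 : ℝ) →
      ∃ M : ℕ, LexLt (greedyDigit β 1)
        (fun n => ⌈β⌉ - 1 - greedyDigit β 1 (M + n)) := by
  have hgood : ∀ᵐ β ∂(volume : Measure ℝ), ∀ N : ℤ, 1 ≤ N → ∀ k : ℕ,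
      β ∉ {β | β ∈ Ioo (N : ℝ) (N + 1) ∧ ∀ m, 1 / (k + 1 : ℝ) ≤ greedyOrbit β m} := by
    simp only [ae_all_iff]
    exact fun N hN k =>
      measure_eq_zero_iff_ae_notMem.1 (volume_setOf_forall_le_greedyOrbit hN (by positivity))
  have hnotint : ∀ᵐ β ∂(volume : Measure ℝ), β ∉ range ((↑) : ℤ → ℝ) :=
    measure_eq_zero_iff_ae_notMem.1 ((countable_range _).measure_zero _)
  filter_upwards [hgood, hnotint] with β hgood hnotint hβ1
  have hN : 1 ≤ ⌊β⌋ := Int.le_floor.2 (by exact_mod_cast hβ1.le)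
  have hβN : β ∈ Ioo (⌊β⌋ : ℝ) (⌊β⌋ + 1) :=
    ⟨(Int.floor_le β).lt_of_ne fun h => hnotint ⟨_, h⟩, Int.lt_floor_add_one β⟩
  refine exists_lexLt_of_forall_exists_greedyOrbit_lt hN hβN fun η hη => ?_
  obtain ⟨k, hk⟩ := exists_nat_one_div_lt hη
  by_contra! H
  exact hgood _ hN k ⟨hβN, fun m => hk.le.trans (H m)⟩
end

section
/- Let n ≥ 1, let E ⊆ {1,…,n} × {1,…,n} be a set of directed edges such that every vertex u has at least one outgoing edge, and for each (u,v) ∈ E let f_{u,v}(x) = r_{uv}·x + a_{uv} be a similitude on ℝ with 0 < r_{uv} < 1. Then there exists a unique vector (C_1,…,C_n) of nonempty compact subsets of ℝ such that C_u = ⋃_{(u,v)∈E} f_{u,v}(C_v) for each u ∈ {1,…,n}. -/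
open Set Metric TopologicalSpace
open scoped NNReal

/-- existence and uniqueness of the attractor of a graph-directed
construction: there is a unique vector `(C_1,…,C_n)` of nonempty compact subsets of `ℝ`
with `C_u = ⋃_{(u,v) ∈ E} f_{u,v}(C_v)` for every vertex `u`. -/
theorem stmt10 (n : ℕ) (hn : 1 ≤ n)
    (E : Fin n → Fin n → Prop) (hE : ∀ u, ∃ v, E u v)
    (r a : Fin n → Fin n → ℝ)
    (hr : ∀ u v, E u v → 0 < r u v ∧ r u v < 1) :
    ∃! C : Fin n → Set ℝ,
      (∀ u, (C u).Nonempty ∧ IsCompact (C u)) ∧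
      ∀ u, C u = ⋃ (v : Fin n) (_ : E u v), (fun x => r u v * x + a u v) '' C v := by
  classical
  haveI : NeZero n := ⟨by omega⟩
  -- the contraction ratio
  set ρ : ℝ≥0 := Finset.univ.sup
      (fun p : Fin n × Fin n => if E p.1 p.2 then (r p.1 p.2).toNNReal else 0) with hρdef
  have hρ1 : ρ < 1 := by
    rw [hρdef]
    refine Finset.sup_lt_iff (by norm_num) |>.2 ?_
    intro p _
    split_ifs with h
    · exact Real.toNNReal_lt_one.2 (hr p.1 p.2 h).2
    · norm_num
  have hρle : ∀ u v, E u v → r u v ≤ (ρ : ℝ) := by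
    intro u v h
    have : (r u v).toNNReal ≤ ρ := by
      have := Finset.le_sup (f := fun p : Fin n × Fin n =>
        if E p.1 p.2 then (r p.1 p.2).toNNReal else 0) (Finset.mem_univ (u, v))
      simpa [h] using this
    calc r u v = ((r u v).toNNReal : ℝ) := by
          rw [Real.coe_toNNReal _ (hr u v h).1.le]
      _ ≤ (ρ : ℝ) := by exact_mod_cast this
  -- the set-level map
  set S : (Fin n → Set ℝ) → Fin n → Set ℝ :=
    fun C u => ⋃ (v : Fin n) (_ : E u v), (fun x => r u v * x + a u v) '' C v with hSdef
  have hScompact : ∀ (C : Fin n → NonemptyCompacts ℝ) u, IsCompact (S (fun v => C v) u) := by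
    intro C u
    refine isCompact_iUnion fun v => isCompact_iUnion fun _ => ?_
    exact (C v).isCompact.image (by continuity)
  have hSne : ∀ (C : Fin n → NonemptyCompacts ℝ) u, (S (fun v => C v) u).Nonempty := by
    intro C u
    obtain ⟨v, hv⟩ := hE u
    obtain ⟨x, hx⟩ := (C v).nonempty
    exact ⟨r u v * x + a u v, mem_iUnion.2 ⟨v, mem_iUnion.2 ⟨hv, mem_image_of_mem _ hx⟩⟩⟩
  set F : (Fin n → NonemptyCompacts ℝ) → (Fin n → NonemptyCompacts ℝ) :=
    fun C u => ⟨⟨S (fun v => C v) u, hScompact C u⟩, hSne C u⟩ with hFdef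
  -- F is a contraction
  have hedist_ne_top : ∀ (A B : NonemptyCompacts ℝ),
      EMetric.hausdorffEdist (A : Set ℝ) (B : Set ℝ) ≠ ⊤ := fun A B =>
    hausdorffEdist_ne_top_of_nonempty_of_bounded A.nonempty B.nonempty
      A.isCompact.isBounded B.isCompact.isBounded
  have hlip : ∀ C D : Fin n → NonemptyCompacts ℝ, dist (F C) (F D) ≤ ρ * dist C D := by
    intro C D
    rw [dist_pi_le_iff (by positivity)]
    intro u
    rw [NonemptyCompacts.dist_eq]
    have key : ∀ (C D : Fin n → NonemptyCompacts ℝ),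
        ∀ x ∈ S (fun v => C v) u, ∃ y ∈ S (fun v => D v) u,
          dist x y ≤ (ρ : ℝ) * dist C D := by
      intro C D x hx
      simp only [hSdef, mem_iUnion] at hx
      obtain ⟨v, hv, c, hc, rfl⟩ := hx
      obtain ⟨d, hd, hdist⟩ := (D v).isCompact.exists_infDist_eq_dist (D v).nonempty c
      refine ⟨r u v * d + a u v, mem_iUnion.2 ⟨v, mem_iUnion.2 ⟨hv, mem_image_of_mem _ hd⟩⟩, ?_⟩
      have h1 : dist c d ≤ dist (C v) (D v) := by
        rw [← hdist, NonemptyCompacts.dist_eq]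
        exact infDist_le_hausdorffDist_of_mem hc (hedist_ne_top _ _)
      have h2 : dist c d ≤ dist C D := h1.trans (dist_le_pi_dist C D v)
      have : dist (r u v * c + a u v) (r u v * d + a u v) = r u v * dist c d := by
        simp only [Real.dist_eq]
        rw [show r u v * c + a u v - (r u v * d + a u v) = r u v * (c - d) by ring,
          abs_mul, abs_of_pos (hr u v hv).1]
      rw [this]
      exact mul_le_mul (hρle u v hv) h2 dist_nonneg (by positivity)
    exact hausdorffDist_le_of_mem_dist (by positivity) (key C D)
      (fun x hx => by
        obtain ⟨y, hy, h⟩ := key D C x hx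
        exact ⟨y, hy, by rwa [dist_comm D C] at h⟩)
  have hcontr : ContractingWith ρ F :=
    ⟨hρ1, LipschitzWith.of_dist_le_mul hlip⟩
  haveI : Nonempty (Fin n → NonemptyCompacts ℝ) :=
    ⟨fun _ => ⟨⟨{0}, isCompact_singleton⟩, singleton_nonempty 0⟩⟩
  set P := ContractingWith.fixedPoint F hcontr with hPdef
  have hfix : F P = P := hcontr.fixedPoint_isFixedPt
  refine ⟨fun u => (P u : Set ℝ), ⟨fun u => ⟨(P u).nonempty, (P u).isCompact⟩, fun u => ?_⟩, ?_⟩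
  · exact (congrArg (fun C : Fin n → NonemptyCompacts ℝ => (C u : Set ℝ)) hfix).symm
  · rintro D ⟨hD1, hD2⟩
    set D' : Fin n → NonemptyCompacts ℝ :=
      fun u => ⟨⟨D u, (hD1 u).2⟩, (hD1 u).1⟩ with hD'def
    have hfixD : F D' = D' := by
      funext u
      ext1
      exact (hD2 u).symm
    have : D' = P := hcontr.fixedPoint_unique' hfixD hfix
    funext u
    exact congrArg (fun C : Fin n → NonemptyCompacts ℝ => (C u : Set ℝ)) this
end

section
/- Assume K = [a,b] is a nondegenerate interval and Ũ is the subshift of finite type determined by the allowed word set W ⊆ {1,…,m}^L. Then for any two distinct words u, v ∈ {1,…,m}^{L−1}, the convex hulls J_u and J_v are disjoint: J_u ∩ J_v = ∅. -/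
open Filter Topology Set
open scoped NNReal

/-! Writing `π` for the coding map, `π '' wordCylinder w = f_w(K)` is an interval because `K` is,
so it contains `J_w`. If `J_u` met `J_v`, then, on the line, a point `π d` of `K_v` (say) would lie in
`J_u`, hence would also have a coding beginning with `u`; as `d` is its only coding, `u = v`. -/

def ifsComp {m : ℕ} (f : Fin m → ℝ → ℝ) : (ℕ → Fin m) → ℕ → ℝ → ℝ
  | _, 0 => id
  | i, n + 1 => f (i 0) ∘ ifsComp f (fun k => i (k + 1)) n

def wordCylinder {α : Type*} {n : ℕ} (w : Fin n → α) : Set (ℕ → α) :=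
  {e | ∀ k : Fin n, e k = w k}

lemma eq_of_mem_wordCylinder {α : Type*} {n : ℕ} {u v : Fin n → α} {e : ℕ → α}
    (hu : e ∈ wordCylinder u) (hv : e ∈ wordCylinder v) : u = v :=
  funext fun k => (hu k).symm.trans (hv k)

lemma exists_lipschitzWith_lt_one {ι : Type*} [Finite ι] {r a : ι → ℝ} {f : ι → ℝ → ℝ}
    (hr : ∀ j, |r j| < 1) (hf : ∀ j x, f j x = r j * x + a j) :
    ∃ R : ℝ≥0, R < 1 ∧ ∀ j, LipschitzWith R (f j) := by
  have : Nonempty {x : ℝ≥0 // x < 1} := ⟨⟨0, zero_lt_one⟩⟩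
  obtain ⟨⟨R, hR⟩, hle⟩ :=
    Finite.exists_le fun j => (⟨⟨|r j|, abs_nonneg _⟩, hr j⟩ : {x : ℝ≥0 // x < 1})
  refine ⟨R, hR, fun j => LipschitzWith.of_dist_le_mul fun x y => ?_⟩
  rw [hf, hf, Real.dist_eq, Real.dist_eq, add_sub_add_right_eq_sub, ← mul_sub, abs_mul]
  exact mul_le_mul_of_nonneg_right (hle j) (abs_nonneg _)

lemma disjoint_convexHull_of_disjoint {s t : Set ℝ} (hst : Disjoint s (convexHull ℝ t))
    (hts : Disjoint t (convexHull ℝ s)) : Disjoint (convexHull ℝ s) (convexHull ℝ t) := by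
  have exists_le {u : Set ℝ} {z : ℝ} (hz : z ∈ convexHull ℝ u) : ∃ p ∈ u, p ≤ z := by
    by_contra! h
    exact lt_irrefl z (convexHull_min (fun p hp => h p hp) (convex_Ioi z) hz)
  refine Set.disjoint_left.2 fun z hzs hzt => ?_
  obtain ⟨p, hp, hpz⟩ := exists_le hzs
  obtain ⟨q, hq, hqz⟩ := exists_le hzt
  rcases le_total p q with hpq | hqp
  · exact Set.disjoint_left.1 hts hq <|
      (convex_convexHull ℝ s).ordConnected.out (subset_convexHull ℝ s hp) hzs ⟨hpq, hqz⟩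
  · exact Set.disjoint_left.1 hst hp <|
      (convex_convexHull ℝ t).ordConnected.out (subset_convexHull ℝ t hq) hzt ⟨hqp, hpz⟩

section

variable {m : ℕ} {f : Fin m → ℝ → ℝ}

lemma ifsIter_eq_ifsComp (i : ℕ → Fin m) : ifsIter m f i = fun n => ifsComp f i n 0 := by
  funext n
  induction n generalizing i with
  | zero => rfl
  | succ n ih => exact congrArg (f (i 0)) (ih _)

lemma lipschitzWith_ifsComp {R : ℝ≥0} (hf : ∀ j, LipschitzWith R (f j)) (i : ℕ → Fin m)
    (n : ℕ) : LipschitzWith (R ^ n) (ifsComp f i n) := by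
  induction n generalizing i with
  | zero => exact LipschitzWith.id
  | succ n ih => rw [pow_succ']; exact (hf _).comp (ih _)

lemma mapsTo_ifsComp {K : Set ℝ} (hK : ∀ j, MapsTo (f j) K K) (i : ℕ → Fin m) (n : ℕ) :
    MapsTo (ifsComp f i n) K K := by
  induction n generalizing i with
  | zero => exact mapsTo_id K
  | succ n ih => exact (hK _).comp (ih _)

lemma ifsComp_eq_of_chain {i : ℕ → Fin m} {t : ℕ → ℝ} (ht : ∀ k, f (i k) (t (k + 1)) = t k)
    (n : ℕ) : ifsComp f i n (t n) = t 0 := by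
  induction n generalizing i t with
  | zero => rfl
  | succ n ih =>
    exact (congrArg (f (i 0)) (ih (t := fun k => t (k + 1)) fun k => ht (k + 1))).trans (ht 0)

lemma Filter.Tendsto.ifsComp_of_dist_le {R : ℝ≥0} (hf : ∀ j, LipschitzWith R (f j)) (hR : R < 1)
    {i : ℕ → Fin m} {y y' : ℕ → ℝ} {C : ℝ} (hC : ∀ n, dist (y n) (y' n) ≤ C) {p : ℝ}
    (h : Tendsto (fun n => ifsComp f i n (y n)) atTop (𝓝 p)) :
    Tendsto (fun n => ifsComp f i n (y' n)) atTop (𝓝 p) := by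
  refine h.congr_dist (squeeze_zero (fun _ => dist_nonneg) (fun n => ?_)
    (by simpa using (tendsto_pow_atTop_nhds_zero_of_lt_one R.coe_nonneg hR).mul_const C))
  calc dist (ifsComp f i n (y n)) (ifsComp f i n (y' n))
      ≤ (R : ℝ) ^ n * dist (y n) (y' n) := by
        exact_mod_cast (lipschitzWith_ifsComp hf i n).dist_le_mul _ _
    _ ≤ (R : ℝ) ^ n * C := by gcongr; exact hC n

variable {R : ℝ≥0} {proj : (ℕ → Fin m) → ℝ} {K : Set ℝ}

lemma mem_of_tendsto_ifsIter_s14 (hf : ∀ j, LipschitzWith R (f j)) (hR : R < 1)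
    (hKc : IsClosed K) (hKf : ∀ j, MapsTo (f j) K K) {x : ℝ} (hx : x ∈ K) {i : ℕ → Fin m}
    {p : ℝ} (hp : Tendsto (ifsIter m f i) atTop (𝓝 p)) : p ∈ K := by
  rw [ifsIter_eq_ifsComp] at hp
  have hlim := hp.ifsComp_of_dist_le hf hR (y' := fun _ => x) fun _ => le_rfl
  exact hKc.mem_of_tendsto hlim (Eventually.of_forall fun n => mapsTo_ifsComp hKf i n hx)

lemma exists_tendsto_ifsIter (hf : ∀ j, LipschitzWith R (f j)) (hR : R < 1)
    (hKb : Bornology.IsBounded K) (hKf : K ⊆ ⋃ j, f j '' K) {x : ℝ} (hx : x ∈ K) :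
    ∃ i, Tendsto (ifsIter m f i) atTop (𝓝 x) := by
  have hpre : ∀ y : K, ∃ j, ∃ z : K, f j z = y := fun y => by simpa using hKf y.2
  choose J g hg using hpre
  set t : ℕ → K := fun n => g^[n] ⟨x, hx⟩
  have hchain : ∀ k, f (J (t k)) (t (k + 1)) = t k := fun k => by
    simp only [t, Function.iterate_succ_apply']
    exact hg _
  have hcomp : ∀ n, ifsComp f (fun k => J (t k)) n (t n) = x :=
    ifsComp_eq_of_chain (t := fun n => (t n : ℝ)) hchain
  obtain ⟨C, hC⟩ := hKb.exists_norm_le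
  refine ⟨fun k => J (t k), ?_⟩
  rw [ifsIter_eq_ifsComp]
  refine Tendsto.ifsComp_of_dist_le hf hR (y := fun n => t n) (C := C) (fun n => ?_) ?_
  · simpa using hC _ (t n).2
  · simpa only [hcomp] using tendsto_const_nhds

lemma range_eq_of_tendsto_ifsIter (hf : ∀ j, LipschitzWith R (f j)) (hR : R < 1)
    (hKc : IsClosed K) (hKb : Bornology.IsBounded K) (hK : K = ⋃ j, f j '' K)
    (hne : K.Nonempty) (hproj : ∀ i, Tendsto (ifsIter m f i) atTop (𝓝 (proj i))) :
    range proj = K := by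
  refine Subset.antisymm (range_subset_iff.2 fun i => ?_) fun x hx => ?_
  · have hKf : ∀ j, MapsTo (f j) K K := fun j y hy => by
      rw [hK]; exact mem_iUnion_of_mem j (mem_image_of_mem _ hy)
    exact mem_of_tendsto_ifsIter_s14 hf hR hKc hKf hne.some_mem (hproj i)
  · obtain ⟨i, hi⟩ := exists_tendsto_ifsIter hf hR hKb hK.subset hx
    exact ⟨i, tendsto_nhds_unique (hproj i) hi⟩

lemma proj_eq_apply_proj_tail (hcont : ∀ j, Continuous (f j))
    (hproj : ∀ i, Tendsto (ifsIter m f i) atTop (𝓝 (proj i))) (i : ℕ → Fin m) :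
    proj i = f (i 0) (proj fun k => i (k + 1)) :=
  tendsto_nhds_unique ((hproj i).comp (tendsto_add_atTop_nat 1))
    ((hcont _).continuousAt.tendsto.comp (hproj _))

lemma image_wordCylinder_cons (hcont : ∀ j, Continuous (f j))
    (hproj : ∀ i, Tendsto (ifsIter m f i) atTop (𝓝 (proj i))) {n : ℕ} (j : Fin m)
    (w : Fin n → Fin m) :
    proj '' wordCylinder (Fin.cons j w : Fin (n + 1) → Fin m) =
      f j '' (proj '' wordCylinder w) := by
  ext x
  constructor
  · rintro ⟨e, he, rfl⟩
    refine ⟨proj fun k => e (k + 1), ⟨_, fun k => by simpa using he k.succ, rfl⟩, ?_⟩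
    rw [proj_eq_apply_proj_tail hcont hproj e, show e 0 = j by simpa using he 0]
  · rintro ⟨_, ⟨e, he, rfl⟩, rfl⟩
    refine ⟨Stream'.cons j e, fun k => ?_, proj_eq_apply_proj_tail hcont hproj _⟩
    cases k using Fin.cases with
    | zero => rfl
    | succ k => simpa [Stream'.cons] using he k

lemma isPreconnected_image_wordCylinder (hcont : ∀ j, Continuous (f j))
    (hproj : ∀ i, Tendsto (ifsIter m f i) atTop (𝓝 (proj i)))
    (hrange : IsPreconnected (range proj)) :
    ∀ {n : ℕ} (w : Fin n → Fin m), IsPreconnected (proj '' wordCylinder w)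
  | 0, w => by simpa [wordCylinder] using hrange
  | n + 1, w => by
    rw [← Fin.cons_self_tail w, image_wordCylinder_cons hcont hproj]
    exact (isPreconnected_image_wordCylinder hcont hproj hrange _).image _ (hcont _).continuousOn

lemma convex_image_wordCylinder (hf : ∀ j, LipschitzWith R (f j)) (hR : R < 1)
    (hKc : IsClosed K) (hKb : Bornology.IsBounded K) (hKp : IsPreconnected K)
    (hK : K = ⋃ j, f j '' K) (hne : K.Nonempty)
    (hproj : ∀ i, Tendsto (ifsIter m f i) atTop (𝓝 (proj i))) {n : ℕ} (w : Fin n → Fin m) :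
    Convex ℝ (proj '' wordCylinder w) := by
  rw [← range_eq_of_tendsto_ifsIter hf hR hKc hKb hK hne hproj] at hKp
  exact Real.convex_iff_isPreconnected.2 <|
    isPreconnected_image_wordCylinder (fun j => (hf j).continuous) hproj hKp w

end

theorem stmt14_general (m : ℕ) (r a : Fin m → ℝ)
    (hr : ∀ j, 0 < r j ∧ r j < 1)
    (f : Fin m → ℝ → ℝ) (hf : ∀ j x, f j x = r j * x + a j)
    (A B : ℝ)
    (K : Set ℝ) (hK : K = Icc A B) (hKattr : K = ⋃ j, f j '' K)
    (proj : (ℕ → Fin m) → ℝ)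
    (hproj : ∀ i : ℕ → Fin m, Tendsto (ifsIter m f i) atTop (𝓝 (proj i)))
    (U : Set ℝ)
    (hU : U = {x | x ∈ K ∧ ∃! i : ℕ → Fin m, Tendsto (ifsIter m f i) atTop (𝓝 x)})
    (Ut : Set (ℕ → Fin m)) (hUt : Ut = proj ⁻¹' U)
    (ℓ : ℕ)
    (Ku : (Fin (ℓ + 1) → Fin m) → Set ℝ)
    (hKu : ∀ u, Ku u = {y | ∃ d ∈ Ut, (∀ i : Fin (ℓ + 1), d i = u i) ∧ proj d = y}) :
    ∀ u v : Fin (ℓ + 1) → Fin m, u ≠ v →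
      convexHull ℝ (Ku u) ∩ convexHull ℝ (Ku v) = ∅ := by
  obtain ⟨R, hR, hlip⟩ :=
    exists_lipschitzWith_lt_one (fun j => (abs_of_pos (hr j).1).trans_lt (hr j).2) hf
  have hKu_sub : ∀ u, Ku u ⊆ proj '' wordCylinder u := by
    intro u
    rw [hKu]
    rintro _ ⟨d, -, hd, rfl⟩
    exact ⟨d, hd, rfl⟩
  have hdisjoint : ∀ u v, u ≠ v → Disjoint (Ku v) (convexHull ℝ (Ku u)) := by
    refine fun u v huv => Set.disjoint_left.2 ?_
    rintro _ hx hxu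
    rw [hKu] at hx
    obtain ⟨d, hdU, hdv, rfl⟩ := hx
    rw [hUt, mem_preimage, hU] at hdU
    obtain ⟨hdK, hunique⟩ := hdU
    have hconv := convex_image_wordCylinder hlip hR (hK ▸ isClosed_Icc)
      (hK ▸ Metric.isBounded_Icc A B) (hK ▸ isPreconnected_Icc) hKattr ⟨_, hdK⟩ hproj u
    obtain ⟨e, heu, hed⟩ := convexHull_min (hKu_sub u) hconv hxu
    replace hed : e = d := hunique.unique (hed ▸ hproj e) (hproj d)
    exact huv (eq_of_mem_wordCylinder (hed ▸ heu) hdv)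
  intro u v huv
  exact disjoint_iff_inter_eq_empty.1 <|
    disjoint_convexHull_of_disjoint (hdisjoint v u huv.symm) (hdisjoint u v huv)

/-- if the attractor `K` is a nondegenerate interval and `Ũ` is the
subshift of finite type determined by the allowed words `W` of length `L = ℓ+2`, then
the convex hulls `J_u` of the pieces `K_u` (over words `u` of length `L−1`) are
pairwise disjoint. -/
theorem stmt14 (m : ℕ) (hm : 2 ≤ m) (r a : Fin m → ℝ)
    (hr : ∀ j, 0 < r j ∧ r j < 1)
    (f : Fin m → ℝ → ℝ) (hf : ∀ j x, f j x = r j * x + a j)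
    (A B : ℝ) (hAB : A < B)
    (K : Set ℝ) (hK : K = Icc A B) (hKattr : K = ⋃ j, f j '' K)
    (proj : (ℕ → Fin m) → ℝ)
    (hproj : ∀ i : ℕ → Fin m, Tendsto (ifsIter m f i) atTop (𝓝 (proj i)))
    (U : Set ℝ)
    (hU : U = {x | x ∈ K ∧ ∃! i : ℕ → Fin m, Tendsto (ifsIter m f i) atTop (𝓝 x)})
    (Ut : Set (ℕ → Fin m)) (hUt : Ut = proj ⁻¹' U)
    (ℓ : ℕ) (W : Set (Fin (ℓ + 2) → Fin m))
    (hSFT : Ut = {x : ℕ → Fin m | ∀ k : ℕ, (fun j : Fin (ℓ + 2) => x (k + j)) ∈ W})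
    (Ku : (Fin (ℓ + 1) → Fin m) → Set ℝ)
    (hKu : ∀ u, Ku u = {y | ∃ d ∈ Ut, (∀ i : Fin (ℓ + 1), d i = u i) ∧ proj d = y}) :
    ∀ u v : Fin (ℓ + 1) → Fin m, u ≠ v →
      convexHull ℝ (Ku u) ∩ convexHull ℝ (Ku v) = ∅ :=
  stmt14_general m r a hr f hf A B K hK hKattr proj hproj U hU Ut hUt ℓ Ku hKu
end
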